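/- arXiv:math/0502011 — 4 statements merged into one kernel-verified Lean document; each statement's English description precedes it below -/
import Mathlib

section
/- Let k ≥ 1 be an integer and c ≥ 1 a real number. Suppose there exist a real number σ₀ ≥ c and a function Z analytic on the half-plane {s : Re s > c} such that for every s with Re s > σ₀ the integral ∫₁^∞ |ζ(1/2+ix)|^{2k} x^{-s} dx converges absolutely and equals Z(s), and such that for every ε > 0 one has sup_{t ∈ ℝ} |Z(c+ε+it)| < ∞. Then for every ε > 0 there is a constant C(ε) such that ∫₀^T |ζ(1/2+it)|^{2k} dt ≤ C(ε)·T^{c+ε} for all T ≥ 1. -/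
/-!
The heart of the matter is Landau's theorem for Dirichlet-type integrals with nonnegative
integrand. Let `f ≥ 0` and `Z(s) = ∫₁^∞ f(x) x^{-s} dx` for `Re s > σ₀`, with `Z` holomorphic on `Re s > c`.
For real `a > σ₀` the derivatives `Z⁽ⁿ⁾(a) = ∫₁^∞ f(x) (-log x)ⁿ x^{-a} dx` alternate in sign, so
the Taylor series of `Z` at `a`, which converges on the whole disc of radius `a - c`, evaluated
at a real `σ ∈ (c, a)` is a series of nonnegative terms. By monotone convergence it equals
`∫₁^∞ f(x) x^{-σ} dx`, since `x^{-σ} = x^{-a} ∑ ((a - σ) log x)ⁿ / n!`. Hence `∫₁^∞ f(x) x^{-σ} dx`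
is finite for every `σ > c`, and `∫₁^T f ≤ T^σ ∫₁^∞ f(x) x^{-σ} dx`.
-/

open MeasureTheory Set Complex Filter

/-- `|ζ(1/2 + i x)|^(2k)` -/
noncomputable def zetaPow (k : ℕ) (x : ℝ) : ℝ :=
  ‖riemannZeta (1/2 + x * Complex.I)‖ ^ (2 * k)

lemma continuous_zetaPow (k : ℕ) : Continuous (zetaPow k) := by
  refine continuous_iff_continuousAt.2 fun x => ?_
  have hne : (1 / 2 + x * I : ℂ) ≠ 1 := fun h => by simpa using congrArg re h
  exact ((ContinuousAt.comp (f := fun y : ℝ => (1 / 2 + y * I : ℂ))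
    (differentiableAt_riemannZeta hne).continuousAt (by fun_prop)).norm).pow _

lemma zetaPow_nonneg (k : ℕ) (x : ℝ) : 0 ≤ zetaPow k x :=
  pow_nonneg (norm_nonneg _) _

theorem integrable_of_hasSum_of_nonneg {α : Type*} [MeasurableSpace α]
    {μ : Measure α} {F : ℕ → α → ℝ} {g : α → ℝ} (hF : ∀ n, Integrable (F n) μ)
    (hF0 : ∀ n, 0 ≤ᵐ[μ] F n) (hg : ∀ᵐ x ∂μ, HasSum (fun n => F n x) (g x))
    (hsum : Summable fun n => ∫ x, F n x ∂μ) : Integrable g μ := by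
  have hF0' : ∀ᵐ x ∂μ, ∀ n, 0 ≤ F n x := ae_all_iff.2 hF0
  have hlint : ∫⁻ x, ∑' n, ENNReal.ofReal (F n x) ∂μ ≠ ⊤ := by
    rw [lintegral_tsum fun n => (hF n).aemeasurable.ennreal_ofReal]
    simp_rw [← ofReal_integral_eq_lintegral_ofReal (hF _) (hF0 _)]
    rw [← ENNReal.ofReal_tsum_of_nonneg (fun n => integral_nonneg_of_ae (hF0 n)) hsum]
    exact ENNReal.ofReal_ne_top
  refine (integrable_toReal_of_lintegral_ne_top
    (AEMeasurable.tsum fun n => (hF n).aemeasurable.ennreal_ofReal) hlint).congr ?_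
  filter_upwards [hg, hF0'] with x hx hx0
  rw [← ENNReal.ofReal_tsum_of_nonneg hx0 hx.summable, hx.tsum_eq,
    ENNReal.toReal_ofReal (hx.nonneg hx0)]

lemma Real.hasSum_rpow_neg {x : ℝ} (hx : 0 < x) (a σ : ℝ) :
    HasSum (fun n : ℕ => (a - σ) ^ n / n.factorial * (Real.log x ^ n * x ^ (-a))) (x ^ (-σ)) := by
  have hexp := NormedSpace.expSeries_div_hasSum_exp ((a - σ) * Real.log x)
  rw [← Real.exp_eq_exp_ℝ, mul_comm, ← Real.rpow_def_of_pos hx] at hexp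
  rw [show -σ = (a - σ) + -a by ring, Real.rpow_add hx]
  refine (hexp.mul_right (x ^ (-a))).congr_fun fun n => ?_
  rw [mul_pow]
  ring

lemma Complex.re_sub_lt_re_of_mem_ball {s u : ℂ} {r : ℝ} (hu : u ∈ Metric.ball s r) :
    s.re - r < u.re := by
  have := (abs_lt.1 ((abs_re_le_norm (u - s)).trans_lt (mem_ball_iff_norm.1 hu))).1
  simp only [sub_re] at this
  linarith

lemma Real.log_pow_le_mul_rpow {x δ : ℝ} (hx : 1 ≤ x) (hδ : 0 < δ) (n : ℕ) :
    Real.log x ^ n ≤ (n / δ) ^ n * x ^ δ := by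
  rcases n.eq_zero_or_pos with rfl | hn
  · simpa using Real.one_le_rpow hx hδ.le
  have hlog := Real.log_le_rpow_div (x := x) (by linarith) (show 0 < δ / n by positivity)
  calc Real.log x ^ n ≤ (x ^ (δ / n) / (δ / n)) ^ n := by gcongr; exact Real.log_nonneg hx
    _ = (n / δ) ^ n * x ^ δ := by
      rw [div_pow, ← Real.rpow_mul_natCast (by linarith), div_mul_cancel₀ _ (by positivity),
        div_eq_mul_inv, ← inv_pow, inv_div, mul_comm]

lemma norm_mul_neg_log_pow_mul_cpow (y : ℂ) (n : ℕ) (s : ℂ) {x : ℝ} (hx : 1 ≤ x) :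
    ‖y * (-(Real.log x : ℂ)) ^ n * (x : ℂ) ^ (-s)‖ = ‖y‖ * Real.log x ^ n * x ^ (-s.re) := by
  rw [norm_mul, norm_mul, norm_pow, norm_neg, Complex.norm_real,
    Real.norm_of_nonneg (Real.log_nonneg hx), Complex.norm_cpow_eq_rpow_re_of_pos (by linarith),
    neg_re]

section DirichletIntegral

variable {g : ℝ → ℂ} {σ₀ : ℝ}
  (hg : ∀ s : ℂ, σ₀ < s.re → IntegrableOn (fun x : ℝ => g x * (x : ℂ) ^ (-s)) (Ioi 1))
include hg

lemma integrableOn_mul_neg_log_pow_mul_cpow (n : ℕ) {s : ℂ} (hs : σ₀ < s.re) :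
    IntegrableOn (fun x : ℝ => g x * (-(Real.log x : ℂ)) ^ n * (x : ℂ) ^ (-s)) (Ioi 1) := by
  obtain ⟨δ, hδ, hsδ⟩ : ∃ δ > 0, σ₀ < s.re - δ := ⟨(s.re - σ₀) / 2, by linarith, by linarith⟩
  have hmeas : AEStronglyMeasurable (fun x : ℝ => g x * (-(Real.log x : ℂ)) ^ n * (x : ℂ) ^ (-s))
      (volume.restrict (Ioi 1)) := by
    have : AEStronglyMeasurable (fun x : ℝ => (-(Real.log x : ℂ)) ^ n) (volume.restrict (Ioi 1)) :=
      by fun_prop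
    exact ((hg s hs).aestronglyMeasurable.mul this).congr
      (ae_of_all _ fun x => mul_right_comm _ _ _)
  refine (((hg (s - δ) (by simpa using hsδ)).norm.const_mul ((n / δ) ^ n))).mono' hmeas ?_
  filter_upwards [ae_restrict_mem measurableSet_Ioi] with x hx
  have hx0 : 0 < x := one_pos.trans hx
  rw [norm_mul_neg_log_pow_mul_cpow (g x) n s hx.le, norm_mul,
    Complex.norm_cpow_eq_rpow_re_of_pos hx0]
  calc ‖g x‖ * Real.log x ^ n * x ^ (-s.re)
      ≤ ‖g x‖ * ((n / δ) ^ n * x ^ δ) * x ^ (-s.re) := by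
        gcongr
        exact Real.log_pow_le_mul_rpow hx.le hδ n
    _ = (n / δ) ^ n * (‖g x‖ * x ^ (-(s - δ)).re) := by
        rw [show (-(s - δ)).re = δ + -s.re by simp; ring, Real.rpow_add hx0]
        ring

lemma hasDerivAt_integral_mul_neg_log_pow_mul_cpow (n : ℕ) {s : ℂ} (hs : σ₀ < s.re) :
    HasDerivAt (fun u : ℂ => ∫ x in Ioi (1 : ℝ), g x * (-(Real.log x : ℂ)) ^ n * (x : ℂ) ^ (-u))
      (∫ x in Ioi (1 : ℝ), g x * (-(Real.log x : ℂ)) ^ (n + 1) * (x : ℂ) ^ (-s)) s := by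
  obtain ⟨ε, hε, hsε⟩ : ∃ ε > 0, σ₀ < s.re - ε := ⟨(s.re - σ₀) / 2, by linarith, by linarith⟩
  have hint := integrableOn_mul_neg_log_pow_mul_cpow hg
  refine (hasDerivAt_integral_of_dominated_loc_of_deriv_le (μ := volume.restrict (Ioi 1))
    (F := fun u x => g x * (-(Real.log x : ℂ)) ^ n * (x : ℂ) ^ (-u))
    (F' := fun u x => g x * (-(Real.log x : ℂ)) ^ (n + 1) * (x : ℂ) ^ (-u))
    (bound := fun x => ‖g x * (-(Real.log x : ℂ)) ^ (n + 1) * (x : ℂ) ^ (-((s.re - ε : ℝ) : ℂ))‖)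
    (Metric.ball_mem_nhds s hε)
    (eventually_of_mem (Metric.ball_mem_nhds s hε) fun u hu =>
      (hint n (hsε.trans (Complex.re_sub_lt_re_of_mem_ball hu))).aestronglyMeasurable)
    (hint n hs) (hint (n + 1) hs).aestronglyMeasurable ?_ (hint (n + 1) (by simpa using hsε)).norm
    ?_).2
  · filter_upwards [ae_restrict_mem measurableSet_Ioi] with x hx u hu
    rw [norm_mul_neg_log_pow_mul_cpow (g x) _ _ hx.le,
      norm_mul_neg_log_pow_mul_cpow (g x) _ _ hx.le]
    refine mul_le_mul_of_nonneg_left (Real.rpow_le_rpow_of_exponent_le hx.le ?_)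
      (mul_nonneg (norm_nonneg _) (pow_nonneg (Real.log_nonneg hx.le) _))
    simp only [ofReal_re, neg_le_neg_iff]
    exact (Complex.re_sub_lt_re_of_mem_ball hu).le
  · filter_upwards [ae_restrict_mem measurableSet_Ioi] with x hx u _
    have hx0 : (x : ℂ) ≠ 0 := by exact_mod_cast (one_pos.trans hx).ne'
    refine (((hasDerivAt_neg u).const_cpow (Or.inl hx0)).const_mul
      (g x * (-(Real.log x : ℂ)) ^ n)).congr_deriv ?_
    rw [← ofReal_log (one_pos.trans hx).le]
    ring

lemma iteratedDeriv_integral_mul_cpow (n : ℕ) {s : ℂ} (hs : σ₀ < s.re) :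
    iteratedDeriv n (fun u : ℂ => ∫ x in Ioi (1 : ℝ), g x * (x : ℂ) ^ (-u)) s
      = ∫ x in Ioi (1 : ℝ), g x * (-(Real.log x : ℂ)) ^ n * (x : ℂ) ^ (-s) := by
  induction n generalizing s with
  | zero => simp
  | succ n ih =>
    have hopen : IsOpen {s : ℂ | σ₀ < s.re} := isOpen_lt continuous_const continuous_re
    rw [iteratedDeriv_succ, (eventuallyEq_of_mem (hopen.mem_nhds hs) fun u hu => ih hu).deriv_eq]
    exact (hasDerivAt_integral_mul_neg_log_pow_mul_cpow hg n hs).deriv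

end DirichletIntegral

lemma ofReal_mul_neg_log_pow_mul_cpow (y : ℝ) (n : ℕ) (a : ℝ) {x : ℝ} (hx : 0 ≤ x) :
    (y : ℂ) * (-(Real.log x : ℂ)) ^ n * (x : ℂ) ^ (-(a : ℂ))
      = (((-1) ^ n * (y * Real.log x ^ n * x ^ (-a)) : ℝ) : ℂ) := by
  rw [← ofReal_neg, ← ofReal_neg a, ← ofReal_cpow hx]
  push_cast
  ring

lemma hasSum_taylorSeries_moments {f : ℝ → ℝ} {c σ₀ : ℝ} {Z : ℂ → ℂ}
    (hZ : DifferentiableOn ℂ Z {s | c < s.re})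
    (hint : ∀ s : ℂ, σ₀ < s.re → IntegrableOn (fun x : ℝ => (f x : ℂ) * (x : ℂ) ^ (-s)) (Ioi 1))
    (hZeq : ∀ s : ℂ, σ₀ < s.re → ∫ x in Ioi (1 : ℝ), (f x : ℂ) * (x : ℂ) ^ (-s) = Z s)
    {a σ : ℝ} (hσ₀a : σ₀ < a) (hcσ : c < σ) (hσa : σ ≤ a) :
    HasSum (fun n : ℕ => (((a - σ) ^ n / n.factorial *
      ∫ x in Ioi (1 : ℝ), f x * Real.log x ^ n * x ^ (-a) : ℝ) : ℂ)) (Z σ) := by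
  have hcoeff : ∀ n, iteratedDeriv n Z a =
      (((-1) ^ n * ∫ x in Ioi (1 : ℝ), f x * Real.log x ^ n * x ^ (-a) : ℝ) : ℂ) := fun n => by
    have hZG : Z =ᶠ[nhds (a : ℂ)] fun u => ∫ x in Ioi (1 : ℝ), (f x : ℂ) * (x : ℂ) ^ (-u) :=
      eventually_of_mem ((isOpen_lt continuous_const continuous_re).mem_nhds
        (by simpa using hσ₀a)) fun u hu => (hZeq u hu).symm
    rw [hZG.iteratedDeriv_eq, iteratedDeriv_integral_mul_cpow hint n (by simpa using hσ₀a),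
      setIntegral_congr_fun measurableSet_Ioi fun x hx =>
        ofReal_mul_neg_log_pow_mul_cpow (f x) n a (one_pos.trans hx).le,
      integral_complex_ofReal, integral_const_mul]
  have hball : Metric.ball (a : ℂ) (a - c) ⊆ {s | c < s.re} := fun u hu => by
    simpa using Complex.re_sub_lt_re_of_mem_ball hu
  have hσball : (σ : ℂ) ∈ Metric.ball (a : ℂ) (a - c) := by
    rw [mem_ball_iff_norm, ← ofReal_sub, norm_real, Real.norm_of_nonpos (by linarith)]
    linarith
  refine (Complex.hasSum_taylorSeries_on_ball (hZ.mono hball) hσball).congr_fun fun n => ?_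
  rw [hcoeff, smul_eq_mul, smul_eq_mul, ← ofReal_sub]
  push_cast
  rw [← mul_assoc, ← mul_assoc, mul_assoc _ _ ((-1) ^ n), ← mul_pow]
  ring

theorem integrableOn_mul_rpow_of_differentiableOn {f : ℝ → ℝ} (hf0 : ∀ x ∈ Ioi (1 : ℝ), 0 ≤ f x)
    {c σ₀ : ℝ} {Z : ℂ → ℂ} (hZ : DifferentiableOn ℂ Z {s | c < s.re})
    (hint : ∀ s : ℂ, σ₀ < s.re → IntegrableOn (fun x : ℝ => (f x : ℂ) * (x : ℂ) ^ (-s)) (Ioi 1))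
    (hZeq : ∀ s : ℂ, σ₀ < s.re → ∫ x in Ioi (1 : ℝ), (f x : ℂ) * (x : ℂ) ^ (-s) = Z s)
    {σ : ℝ} (hσ : c < σ) : IntegrableOn (fun x => f x * x ^ (-σ)) (Ioi 1) := by
  obtain ⟨a, hσ₀a, hσa⟩ : ∃ a, σ₀ < a ∧ σ < a :=
    ⟨max σ₀ σ + 1, by linarith [le_max_left σ₀ σ], by linarith [le_max_right σ₀ σ]⟩
  have hmoment : ∀ n, IntegrableOn (fun x => f x * Real.log x ^ n * x ^ (-a)) (Ioi 1) := fun n =>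
    IntegrableOn.congr_fun
      (integrableOn_mul_neg_log_pow_mul_cpow hint n (s := a) (by simpa using hσ₀a)).norm
      (fun x hx => by
        rw [norm_mul_neg_log_pow_mul_cpow _ _ _ (le_of_lt hx), norm_real,
          Real.norm_of_nonneg (hf0 x hx), ofReal_re]) measurableSet_Ioi
  refine integrable_of_hasSum_of_nonneg
    (F := fun n x => (a - σ) ^ n / n.factorial * (f x * Real.log x ^ n * x ^ (-a)))
    (fun n => (hmoment n).const_mul _) (fun n => ?_) ?_ ?_
  · filter_upwards [ae_restrict_mem measurableSet_Ioi] with x hx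
    exact mul_nonneg (div_nonneg (pow_nonneg (by linarith) n) (Nat.cast_nonneg _))
      (mul_nonneg (mul_nonneg (hf0 x hx) (pow_nonneg (Real.log_nonneg hx.le) n))
        (Real.rpow_nonneg (one_pos.trans hx).le _))
  · filter_upwards [ae_restrict_mem measurableSet_Ioi] with x hx
    exact ((Real.hasSum_rpow_neg (one_pos.trans hx) a σ).mul_left (f x)).congr_fun fun n => by ring
  · simp_rw [integral_const_mul]
    exact Complex.summable_ofReal.1
      (hasSum_taylorSeries_moments hZ hint hZeq hσ₀a hσ hσa.le).summable

lemma exists_intervalIntegral_le_mul_rpow {f : ℝ → ℝ} (hf : Continuous f)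
    (hf0 : ∀ x ∈ Ioi (1 : ℝ), 0 ≤ f x) {σ : ℝ} (hσ : 0 ≤ σ)
    (hint : IntegrableOn (fun x => f x * x ^ (-σ)) (Ioi 1)) :
    ∃ C, ∀ T ≥ (1 : ℝ), ∫ t in (0 : ℝ)..T, f t ≤ C * T ^ σ := by
  refine ⟨|∫ t in (0 : ℝ)..1, f t| + ∫ x in Ioi (1 : ℝ), f x * x ^ (-σ), fun T hT => ?_⟩
  have hTσ : 1 ≤ T ^ σ := Real.one_le_rpow hT hσ
  have htail : ∫ t in (1 : ℝ)..T, f t ≤ (∫ x in Ioi (1 : ℝ), f x * x ^ (-σ)) * T ^ σ := by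
    rw [intervalIntegral.integral_of_le hT, ← integral_mul_const]
    refine (setIntegral_mono_on hf.integrableOn_Ioc
      ((hint.mono_set Ioc_subset_Ioi_self).mul_const _) measurableSet_Ioc fun x hx => ?_).trans
      (setIntegral_mono_set (hint.mul_const _) ?_ Ioc_subset_Ioi_self.eventuallyLE)
    · have hx0 : 0 < x := one_pos.trans hx.1
      calc f x = f x * x ^ (-σ) * x ^ σ := by
            rw [mul_assoc, ← Real.rpow_add hx0, neg_add_cancel, Real.rpow_zero, mul_one]
        _ ≤ f x * x ^ (-σ) * T ^ σ := by
            gcongr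
            · exact mul_nonneg (hf0 x hx.1) (Real.rpow_nonneg hx0.le _)
            · exact hx.2
    · filter_upwards [ae_restrict_mem measurableSet_Ioi] with x hx
      exact mul_nonneg (mul_nonneg (hf0 x hx) (Real.rpow_nonneg (one_pos.trans hx).le _))
        (by positivity)
  rw [← intervalIntegral.integral_add_adjacent_intervals (hf.intervalIntegrable 0 1)
    (hf.intervalIntegrable 1 T)]
  nlinarith [le_abs_self (∫ t in (0 : ℝ)..1, f t), abs_nonneg (∫ t in (0 : ℝ)..1, f t)]

theorem stmt1_general (k : ℕ) (c : ℝ) (hc : 1 ≤ c)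
    (h : ∃ (σ₀ : ℝ) (Z : ℂ → ℂ), c ≤ σ₀ ∧
      DifferentiableOn ℂ Z {s : ℂ | c < s.re} ∧
      (∀ s : ℂ, σ₀ < s.re →
        IntegrableOn (fun x : ℝ => (zetaPow k x : ℂ) * (x:ℂ) ^ (-s)) (Ioi (1:ℝ)) ∧
        (∫ x in Ioi (1:ℝ), (zetaPow k x : ℂ) * (x:ℂ) ^ (-s)) = Z s) ∧
      (∀ ε > (0:ℝ), ∃ C : ℝ, ∀ t : ℝ, ‖Z (((c + ε : ℝ) : ℂ) + t * Complex.I)‖ ≤ C)) :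
    ∀ ε > (0:ℝ), ∃ C : ℝ, ∀ T ≥ (1:ℝ),
      (∫ t in (0:ℝ)..T, zetaPow k t) ≤ C * T ^ (c + ε) := by
  obtain ⟨σ₀, Z, -, hZ, hZint, -⟩ := h
  intro ε hε
  have hnonneg : ∀ x ∈ Ioi (1 : ℝ), 0 ≤ zetaPow k x := fun x _ => zetaPow_nonneg k x
  have hmellin : IntegrableOn (fun x => zetaPow k x * x ^ (-(c + ε))) (Ioi 1) :=
    integrableOn_mul_rpow_of_differentiableOn hnonneg hZ (fun s hs => (hZint s hs).1)
      (fun s hs => (hZint s hs).2) (lt_add_of_pos_right c hε)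
  exact exists_intervalIntegral_le_mul_rpow (continuous_zetaPow k) hnonneg (by linarith) hmellin

theorem stmt1 (k : ℕ) (hk : 1 ≤ k) (c : ℝ) (hc : 1 ≤ c)
    (h : ∃ (σ₀ : ℝ) (Z : ℂ → ℂ), c ≤ σ₀ ∧
      DifferentiableOn ℂ Z {s : ℂ | c < s.re} ∧
      (∀ s : ℂ, σ₀ < s.re →
        IntegrableOn (fun x : ℝ => (zetaPow k x : ℂ) * (x:ℂ) ^ (-s)) (Ioi (1:ℝ)) ∧
        (∫ x in Ioi (1:ℝ), (zetaPow k x : ℂ) * (x:ℂ) ^ (-s)) = Z s) ∧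
      (∀ ε > (0:ℝ), ∃ C : ℝ, ∀ t : ℝ, ‖Z (((c + ε : ℝ) : ℂ) + t * Complex.I)‖ ≤ C)) :
    ∀ ε > (0:ℝ), ∃ C : ℝ, ∀ T ≥ (1:ℝ),
      (∫ t in (0:ℝ)..T, zetaPow k t) ≤ C * T ^ (c + ε) :=
  stmt1_general k c hc h
end

section
/- Let k ≥ 1 be an integer and let s ∈ ℂ with σ = Re s be such that ∫₁^∞ |ζ(1/2+ix)|^{2k} x^{-σ} dx < ∞. Then Z_k(s)² = 2 ∫₁^∞ x^{-s} ( ∫_{√x}^{x} |ζ(1/2+iu)|^{2k} · |ζ(1/2+i(x/u))|^{2k} du/u ) dx, where both sides converge absolutely. -/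
/-
With `F = 1_{(1,∞)}(x) |ζ(1/2+ix)|^{2k} x^{-s}` we have `Z_k(s) = ∫ F`, and Fubini together with
the substitution `x = u v` gives `Z_k(s)² = ∫ (F ⋆ F)`, where `⋆` is multiplicative convolution.
For `x > 1`, `(F ⋆ F)(x) = x^{-s} ∫_1^x |ζ(1/2+iu)|^{2k} |ζ(1/2+ix/u)|^{2k} du/u`, and the
involution `u ↦ x / u`, which swaps `[1, √x]` and `[√x, x]` and preserves `du/u`, halves the range.
-/

open MeasureTheory Set Complex Filter

/-- The modified Mellin transform `Z_k(s) = ∫₁^∞ |ζ(1/2+ix)|^{2k} x^{-s} dx`. -/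
noncomputable def modMellin (k : ℕ) (s : ℂ) : ℂ :=
  ∫ x in Ioi (1:ℝ), (zetaPow k x : ℂ) * (x:ℂ) ^ (-s)

section RCLike

variable {𝕜 : Type*} [RCLike 𝕜]

/-- Multiplicative convolution on `ℝ`; `du / |u|` is the Haar measure of `ℝˣ`. -/
noncomputable def mulConv (g₁ g₂ : ℝ → 𝕜) (x : ℝ) : 𝕜 :=
  ∫ u, |u|⁻¹ • (g₁ u * g₂ (x / u))

lemma integral_inv_abs_smul_mul_comp_div (g₁ g₂ : ℝ → 𝕜) {u : ℝ} (hu : u ≠ 0) :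
    ∫ x, |u|⁻¹ • (g₁ u * g₂ (x / u)) = g₁ u * ∫ x, g₂ x := by
  rw [integral_smul, integral_const_mul, Measure.integral_comp_div, mul_smul_comm, smul_smul,
    inv_mul_cancel₀ (abs_ne_zero.2 hu), one_smul]

lemma integrable_mulConv_kernel {g₁ g₂ : ℝ → 𝕜} (h₁ : Integrable g₁) (h₂ : Integrable g₂)
    (hm₂ : Measurable g₂) :
    Integrable (fun p : ℝ × ℝ => |p.1|⁻¹ • (g₁ p.1 * g₂ (p.2 / p.1))) (volume.prod volume) := by
  have hmeas : AEStronglyMeasurable (fun p : ℝ × ℝ => |p.1|⁻¹ • (g₁ p.1 * g₂ (p.2 / p.1)))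
      (volume.prod volume) :=
    (measurable_fst.abs.inv.aestronglyMeasurable).smul
      (h₁.1.comp_fst.mul (hm₂.comp (measurable_snd.div measurable_fst)).aestronglyMeasurable)
  refine (integrable_prod_iff hmeas).2 ⟨?_, ?_⟩
  · filter_upwards [Measure.ae_ne volume 0] with u hu
    exact ((h₂.comp_div hu).const_mul (g₁ u)).smul (|u|⁻¹)
  · refine (h₁.norm.mul_const (∫ x, ‖g₂ x‖)).congr ?_
    filter_upwards [Measure.ae_ne volume 0] with u hu
    simp only [norm_smul, norm_mul, norm_inv, Real.norm_eq_abs, abs_abs]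
    exact (integral_inv_abs_smul_mul_comp_div (fun x => ‖g₁ x‖) (fun x => ‖g₂ x‖) hu).symm

theorem integrable_mulConv {g₁ g₂ : ℝ → 𝕜} (h₁ : Integrable g₁) (h₂ : Integrable g₂)
    (hm₂ : Measurable g₂) : Integrable (mulConv g₁ g₂) :=
  (integrable_mulConv_kernel h₁ h₂ hm₂).integral_prod_right

theorem integral_mulConv {g₁ g₂ : ℝ → 𝕜} (h₁ : Integrable g₁) (h₂ : Integrable g₂)
    (hm₂ : Measurable g₂) : ∫ x, mulConv g₁ g₂ x = (∫ x, g₁ x) * ∫ x, g₂ x := by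
  have hK := integrable_mulConv_kernel h₁ h₂ hm₂
  calc ∫ x, mulConv g₁ g₂ x = ∫ u, ∫ x, |u|⁻¹ • (g₁ u * g₂ (x / u)) :=
        (integral_prod_symm _ hK).symm.trans (integral_prod _ hK)
    _ = ∫ u, g₁ u * ∫ x, g₂ x := integral_congr_ae <| by
        filter_upwards [Measure.ae_ne volume 0] with u hu
        exact integral_inv_abs_smul_mul_comp_div g₁ g₂ hu
    _ = (∫ x, g₁ x) * ∫ x, g₂ x := integral_mul_const _ _

lemma indicator_Ioi_one_mul_indicator_comp_div (F₁ F₂ : ℝ → 𝕜) (x u : ℝ) :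
    (Ioi 1).indicator F₁ u * (Ioi 1).indicator F₂ (x / u) =
      (Ioo 1 x).indicator (fun u => F₁ u * F₂ (x / u)) u := by
  by_cases hux : u ∈ Ioo 1 x
  · have hxu : x / u ∈ Ioi 1 := (one_lt_div (zero_lt_one.trans hux.1)).2 hux.2
    rw [indicator_of_mem hux, indicator_of_mem (show u ∈ Ioi 1 from hux.1), indicator_of_mem hxu]
  · rw [indicator_of_notMem hux]
    by_cases hu : u ∈ Ioi 1
    · have hxu : x / u ∉ Ioi 1 := fun h => hux ⟨hu, (one_lt_div (zero_lt_one.trans hu)).1 h⟩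
      rw [indicator_of_notMem hxu, mul_zero]
    · rw [indicator_of_notMem hu, zero_mul]

lemma mulConv_indicator_Ioi_one (F₁ F₂ : ℝ → 𝕜) (x : ℝ) :
    mulConv ((Ioi 1).indicator F₁) ((Ioi 1).indicator F₂) x =
      ∫ u in Ioo 1 x, |u|⁻¹ • (F₁ u * F₂ (x / u)) := by
  rw [mulConv, ← integral_indicator measurableSet_Ioo]
  congr 1 with u
  rw [indicator_smul_apply, indicator_Ioi_one_mul_indicator_comp_div]

lemma mulConv_indicator_Ioi_one_of_le (F₁ F₂ : ℝ → 𝕜) {x : ℝ} (hx : x ≤ 1) :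
    mulConv ((Ioi 1).indicator F₁) ((Ioi 1).indicator F₂) x = 0 := by
  rw [mulConv_indicator_Ioi_one, Ioo_eq_empty (not_lt.2 hx), Measure.restrict_empty,
    integral_zero_measure]

lemma sqrt_mem_uIcc_one {x : ℝ} (hx : 0 ≤ x) : √x ∈ uIcc 1 x := by
  have hsq := Real.mul_self_sqrt hx
  rcases le_total 1 x with h | h
  · rw [uIcc_of_le h]
    exact ⟨Real.one_le_sqrt.2 h, by nlinarith [Real.one_le_sqrt.2 h]⟩
  · rw [uIcc_of_ge h]
    exact ⟨by nlinarith [Real.sqrt_le_one.2 h, Real.sqrt_nonneg x], Real.sqrt_le_one.2 h⟩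

lemma intervalIntegral_mul_comp_div_eq_two_mul {f : ℝ → 𝕜} {x : ℝ} (hx : 0 < x)
    (hint : IntervalIntegrable (fun u => f u * f (x / u) * (u : 𝕜)⁻¹) volume 1 x) :
    ∫ u in (1:ℝ)..x, f u * f (x / u) * (u : 𝕜)⁻¹ =
      2 * ∫ u in √x..x, f u * f (x / u) * (u : 𝕜)⁻¹ := by
  set h : ℝ → 𝕜 := fun u => f u * f (x / u) * (u : 𝕜)⁻¹
  have hpos : ∀ u ∈ uIcc 1 √x, 0 < u := fun u hu =>
    (lt_min one_pos (Real.sqrt_pos.2 hx)).trans_le hu.1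
  have hswap : ∫ u in (1:ℝ)..√x, h u = ∫ u in √x..x, h u := by
    have hcov := intervalIntegral.integral_deriv_smul_comp_of_deriv_nonpos (g := h)
      (f := fun u => x / u) (f' := fun u => -(x / u ^ 2)) (a := 1) (b := √x)
      (continuousOn_const.div continuousOn_id fun u hu => (hpos u hu).ne')
      (fun u hu => by
        simpa [div_eq_mul_inv, mul_neg] using
          (hasDerivAt_inv (hpos u (Ioo_subset_Icc_self hu)).ne').const_mul x)
      (fun u _ => neg_nonpos.2 (by positivity))
    have hcongr : EqOn (fun u => -(x / u ^ 2) • (h ∘ fun u => x / u) u) (fun u => -h u)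
        (uIcc 1 √x) := fun u hu => by
      have hu0 : (u : 𝕜) ≠ 0 := by exact_mod_cast (hpos u hu).ne'
      have hx0 : (x : 𝕜) ≠ 0 := by exact_mod_cast hx.ne'
      simp only [h, Function.comp_apply, div_div_cancel₀ hx.ne', RCLike.real_smul_eq_coe_mul]
      push_cast
      field_simp
    rw [intervalIntegral.integral_congr hcongr, intervalIntegral.integral_neg, div_one,
      Real.div_sqrt, intervalIntegral.integral_symm (√x) x] at hcov
    exact neg_injective hcov
  have hsqrt := sqrt_mem_uIcc_one hx.le
  have h₁ : IntervalIntegrable h volume 1 √x :=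
    hint.mono_set (uIcc_subset_uIcc left_mem_uIcc hsqrt)
  have h₂ : IntervalIntegrable h volume √x x :=
    hint.mono_set (uIcc_subset_uIcc hsqrt right_mem_uIcc)
  rw [← intervalIntegral.integral_add_adjacent_intervals h₁ h₂, hswap, two_mul]

end RCLike

lemma ofReal_cpow_mul_ofReal_div_cpow {u x : ℝ} (hu : 0 < u) (hx : 0 ≤ x) (s : ℂ) :
    (u : ℂ) ^ s * ((x / u : ℝ) : ℂ) ^ s = (x : ℂ) ^ s := by
  rw [← mul_cpow_ofReal_nonneg hu.le (div_nonneg hx hu.le), ← ofReal_mul,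
    mul_div_cancel₀ x hu.ne']

lemma norm_ofReal_mul_ofReal_cpow (a : ℝ) {x : ℝ} (hx : 0 < x) (s : ℂ) :
    ‖(a : ℂ) * (x : ℂ) ^ s‖ = ‖a * x ^ s.re‖ := by
  rw [norm_mul, norm_mul, Complex.norm_real, Complex.norm_cpow_eq_rpow_re_of_pos hx,
    Real.norm_of_nonneg (Real.rpow_nonneg hx.le _)]

lemma mulConv_indicator_Ioi_one_mul_cpow {f : ℝ → ℂ} (hf : ContinuousOn f (Ioi 0)) (s : ℂ)
    {x : ℝ} (hx : 1 < x) :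
    mulConv ((Ioi 1).indicator fun u => f u * (u : ℂ) ^ (-s))
        ((Ioi 1).indicator fun u => f u * (u : ℂ) ^ (-s)) x =
      2 * ((x : ℂ) ^ (-s) * ∫ u in √x..x, f u * f (x / u) * (u : ℂ)⁻¹) := by
  have hx0 : 0 < x := zero_lt_one.trans hx
  have hpos : ∀ u ∈ uIcc 1 x, 0 < u := fun u hu => (lt_min one_pos hx0).trans_le hu.1
  have hint : IntervalIntegrable (fun u => f u * f (x / u) * (u : ℂ)⁻¹) volume 1 x := by
    refine ContinuousOn.intervalIntegrable ((hf.mono fun u hu => hpos u hu).mul ?_ |>.mul ?_)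
    · exact hf.comp (continuousOn_const.div continuousOn_id fun u hu => (hpos u hu).ne')
        fun u hu => div_pos hx0 (hpos u hu)
    · exact (continuous_ofReal.continuousOn).inv₀ fun u hu => ofReal_ne_zero.2 (hpos u hu).ne'
  have hhalf : ∫ u in (1:ℝ)..x, f u * f (x / u) * (u : ℂ)⁻¹ =
      2 * ∫ u in √x..x, f u * f (x / u) * (u : ℂ)⁻¹ :=
    intervalIntegral_mul_comp_div_eq_two_mul hx0 hint
  rw [mulConv_indicator_Ioi_one, mul_left_comm (2 : ℂ), ← hhalf,
    intervalIntegral.integral_of_le hx.le, integral_Ioc_eq_integral_Ioo, ← integral_const_mul]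
  refine setIntegral_congr_fun measurableSet_Ioo fun u hu => ?_
  have hu0 : 0 < u := zero_lt_one.trans hu.1
  rw [abs_of_pos hu0, Complex.real_smul, ofReal_inv,
    ← ofReal_cpow_mul_ofReal_div_cpow hu0 hx0.le (-s)]
  ring

theorem stmt5_general (k : ℕ) (s : ℂ)
    (habs : IntegrableOn (fun x : ℝ => zetaPow k x * x ^ (-s.re)) (Ioi (1:ℝ))) :
    IntegrableOn
      (fun x : ℝ => (x:ℂ) ^ (-s) *
        ∫ u in Real.sqrt x..x, (zetaPow k u : ℂ) * (zetaPow k (x / u) : ℂ) * (u:ℂ)⁻¹)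
      (Ioi (1:ℝ)) ∧
    (modMellin k s) ^ 2 =
      2 * ∫ x in Ioi (1:ℝ), (x:ℂ) ^ (-s) *
        ∫ u in Real.sqrt x..x, (zetaPow k u : ℂ) * (zetaPow k (x / u) : ℂ) * (u:ℂ)⁻¹ := by
  have hGm : Measurable fun x : ℝ => (zetaPow k x : ℂ) * (x : ℂ) ^ (-s) :=
    (continuous_zetaPow k).measurable.complex_ofReal.mul (by fun_prop)
  set F : ℝ → ℂ := (Ioi 1).indicator fun x => (zetaPow k x : ℂ) * (x : ℂ) ^ (-s)
  have hFm : Measurable F := hGm.indicator measurableSet_Ioi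
  have hF : Integrable F := by
    refine (integrable_indicator_iff measurableSet_Ioi).2
      (habs.congr' hGm.aestronglyMeasurable ?_)
    filter_upwards [ae_restrict_mem measurableSet_Ioi] with x hx
    rw [norm_ofReal_mul_ofReal_cpow _ (zero_lt_one.trans hx), neg_re]
  have hconv : ∀ x ∈ Ioi (1 : ℝ), mulConv F F x = 2 * ((x : ℂ) ^ (-s) *
      ∫ u in √x..x, (zetaPow k u : ℂ) * (zetaPow k (x / u) : ℂ) * (u : ℂ)⁻¹) := fun x hx =>
    mulConv_indicator_Ioi_one_mul_cpow
      (continuous_ofReal.comp (continuous_zetaPow k)).continuousOn s hx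
  refine ⟨IntegrableOn.congr_fun ((integrable_mulConv hF hF hFm).integrableOn.const_mul 2⁻¹)
    (fun x hx => by rw [hconv x hx, inv_mul_cancel_left₀ two_ne_zero]) measurableSet_Ioi, ?_⟩
  calc modMellin k s ^ 2 = ∫ x, mulConv F F x := by
        rw [integral_mulConv hF hF hFm, modMellin, ← integral_indicator measurableSet_Ioi, sq]
    _ = ∫ x in Ioi 1, mulConv F F x := (setIntegral_eq_integral_of_forall_compl_eq_zero
        fun x hx => mulConv_indicator_Ioi_one_of_le _ _ (not_lt.1 hx)).symm
    _ = _ := by rw [setIntegral_congr_fun measurableSet_Ioi hconv, integral_const_mul]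

theorem stmt5 (k : ℕ) (hk : 1 ≤ k) (s : ℂ)
    (habs : IntegrableOn (fun x : ℝ => zetaPow k x * x ^ (-s.re)) (Ioi (1:ℝ))) :
    IntegrableOn
      (fun x : ℝ => (x:ℂ) ^ (-s) *
        ∫ u in Real.sqrt x..x, (zetaPow k u : ℂ) * (zetaPow k (x / u) : ℂ) * (u:ℂ)⁻¹)
      (Ioi (1:ℝ)) ∧
    (modMellin k s) ^ 2 =
      2 * ∫ x in Ioi (1:ℝ), (x:ℂ) ^ (-s) *
        ∫ u in Real.sqrt x..x, (zetaPow k u : ℂ) * (zetaPow k (x / u) : ℂ) * (u:ℂ)⁻¹ :=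
  stmt5_general k s habs
end

section
/- Let 0 < a < b be real numbers, let f : [a,b] → ℂ be integrable, and let s ∈ ℂ. Then ( ∫_a^b f(x) x^{-s} dx )² = 2 ∫_{a²}^{b²} x^{-s} ( ∫_{√x}^{min(x/a, b)} f(u) · f(x/u) du/u ) dx. -/
open MeasureTheory Set Complex

/-!
With `g = 𝟙_[a,b] f`, the left side is the square of the Mellin transform `mellin g (1 - s)`.
In logarithmic coordinates `u = eᵗ` the Mellin transform becomes `∫ e^{st} g(eᵗ) dt` and the
Mellin convolution `∫ g(u) g(x/u) du/u` becomes an additive convolution, so the convolution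
theorem on `ℝ` shows that the Mellin transform of the Mellin convolution of `g` with itself is
`(mellin g)²`. The Mellin convolution of `g` with itself vanishes off `[a², b²]`, and its integrand
is invariant under `u ↦ x/u`, which exchanges `(0, √x)` and `(√x, ∞)`; so it is twice the integral
over `u > √x`, where the constraints `u, x/u ∈ [a, b]` reduce to `u ≤ min (x/a) b`.
-/

section ExpSubstitution

variable {E : Type*} [NormedAddCommGroup E] [NormedSpace ℝ E]

lemma integral_comp_rexp (g : ℝ → E) :
    ∫ y, Real.exp y • g (Real.exp y) = ∫ t in Ioi 0, g t := by
  rw [← Real.range_exp, ← image_univ, integral_image_eq_integral_abs_deriv_smul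
    MeasurableSet.univ (fun y _ ↦ (Real.hasDerivAt_exp y).hasDerivWithinAt)
    Real.exp_injective.injOn, Measure.restrict_univ]
  simp_rw [abs_of_pos (Real.exp_pos _)]

lemma integrable_comp_rexp_iff (g : ℝ → E) :
    Integrable (fun y ↦ Real.exp y • g (Real.exp y)) ↔ IntegrableOn g (Ioi 0) := by
  rw [← Real.range_exp, ← image_univ, integrableOn_image_iff_integrableOn_abs_deriv_smul
    MeasurableSet.univ (fun y _ ↦ (Real.hasDerivAt_exp y).hasDerivWithinAt)
    Real.exp_injective.injOn, integrableOn_univ]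
  simp_rw [abs_of_pos (Real.exp_pos _)]

end ExpSubstitution

lemma ofReal_exp_cpow (y : ℝ) (w : ℂ) : ((Real.exp y : ℝ) : ℂ) ^ w = cexp (y * w) := by
  rw [cpow_def_of_ne_zero (ofReal_ne_zero.mpr (Real.exp_pos y).ne'),
    ← ofReal_log (Real.exp_pos y).le, Real.log_exp]

section Mellin

variable {E : Type*} [NormedAddCommGroup E] [NormedSpace ℂ E]

lemma rexp_smul_cpow_sub_one (y : ℝ) (s : ℂ) (e : E) :
    Real.exp y • ((Real.exp y : ℂ) ^ (s - 1) • e) = cexp (s * y) • e := by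
  rw [ofReal_exp_cpow, RCLike.real_smul_eq_coe_smul (K := ℂ), smul_smul]
  congr 1
  change (Real.exp y : ℂ) * _ = _
  rw [ofReal_exp, ← Complex.exp_add]
  ring_nf

lemma mellin_eq_integral_exp (f : ℝ → E) (s : ℂ) :
    mellin f s = ∫ y : ℝ, cexp (s * y) • f (Real.exp y) := by
  simp_rw [mellin, ← integral_comp_rexp, rexp_smul_cpow_sub_one]

lemma mellinConvergent_iff_integrable_exp (f : ℝ → E) (s : ℂ) :
    MellinConvergent f s ↔ Integrable (fun y : ℝ ↦ cexp (s * y) • f (Real.exp y)) := by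
  simp_rw [MellinConvergent, ← integrable_comp_rexp_iff, rexp_smul_cpow_sub_one]

end Mellin

noncomputable def mellinConv (g h : ℝ → ℂ) (x : ℝ) : ℂ :=
  ∫ u in Ioi 0, g u * h (x / u) * (u : ℂ)⁻¹

lemma mellinConv_exp (g h : ℝ → ℂ) (y : ℝ) :
    mellinConv g h (Real.exp y) = ∫ t, g (Real.exp t) * h (Real.exp (y - t)) := by
  rw [mellinConv, ← integral_comp_rexp]
  congr 1 with t
  rw [Real.exp_sub, real_smul, ofReal_exp]
  field_simp

theorem mellin_mellinConv {g h : ℝ → ℂ} {s : ℂ} (hg : MellinConvergent g s)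
    (hh : MellinConvergent h s) : mellin (mellinConv g h) s = mellin g s * mellin h s := by
  rw [mellinConvergent_iff_integrable_exp] at hg hh
  simp only [mellin_eq_integral_exp]
  rw [← ContinuousLinearMap.mul_apply' ℂ ℂ, ← integral_convolution _ hg hh]
  congr 1 with y
  rw [mellinConv_exp, convolution_def, smul_eq_mul, ← integral_const_mul]
  congr 1 with t
  have : cexp (s * y) = cexp (s * t) * cexp (s * ↑(y - t)) := by
    rw [← Complex.exp_add]; push_cast; ring_nf
  simp only [smul_eq_mul, ContinuousLinearMap.mul_apply', this]
  ring

lemma image_div_Ioi {x r : ℝ} (hx : 0 < x) (hr : 0 < r) :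
    (fun u ↦ x / u) '' Ioi r = Ioo 0 (x / r) := by
  ext v
  constructor
  · rintro ⟨u, hu, rfl⟩
    exact ⟨div_pos hx (hr.trans hu), div_lt_div_of_pos_left hx hr hu⟩
  · rintro ⟨hv, hvr⟩
    refine ⟨x / v, ?_, div_div_cancel₀ hx.ne'⟩
    rwa [mem_Ioi, lt_div_iff₀ hv, mul_comm, ← lt_div_iff₀ hr]

lemma mellinConv_self_eq_two_mul (g : ℝ → ℂ) {x : ℝ} (hx : 0 < x) :
    mellinConv g g x = 2 * ∫ u in Ioi √x, g u * g (x / u) * (u : ℂ)⁻¹ := by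
  set k : ℝ → ℂ := fun u ↦ g u * g (x / u) * (u : ℂ)⁻¹
  have hr : 0 < √x := Real.sqrt_pos.mpr hx
  have himage : (fun u ↦ x / u) '' Ioi √x = Ioo 0 √x := by
    rw [image_div_Ioi hx hr, Real.div_sqrt]
  have hderiv : ∀ u ∈ Ioi √x, HasDerivWithinAt (fun u ↦ x / u) (-(x / u ^ 2)) (Ioi √x) u :=
    fun u hu ↦ by
      simpa [div_eq_mul_inv, neg_div] using
        ((hasDerivAt_inv (hr.trans hu).ne').const_mul x).hasDerivWithinAt
  have hinj : InjOn (fun u ↦ x / u) (Ioi √x) := fun u hu v hv huv ↦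
    inv_injective (mul_left_cancel₀ hx.ne' huv)
  have hinvariant : EqOn (fun u ↦ |-(x / u ^ 2)| • k (x / u)) k (Ioi √x) := fun u hu ↦ by
    have hu0 : u ≠ 0 := (hr.trans hu).ne'
    have hx0 : (x : ℂ) ≠ 0 := ofReal_ne_zero.mpr hx.ne'
    simp only [k, abs_neg, abs_of_pos (div_pos hx (pow_pos (hr.trans hu) 2)),
      div_div_cancel₀ hx.ne', real_smul]
    push_cast
    field_simp
  have heq : ∫ u in Ioo 0 √x, k u = ∫ u in Ioi √x, k u := by
    rw [← himage, integral_image_eq_integral_abs_deriv_smul measurableSet_Ioi hderiv hinj]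
    exact setIntegral_congr_fun measurableSet_Ioi hinvariant
  have hint : IntegrableOn k (Ioo 0 √x) ↔ IntegrableOn k (Ioi √x) := by
    rw [← himage, integrableOn_image_iff_integrableOn_abs_deriv_smul measurableSet_Ioi hderiv hinj]
    exact integrableOn_congr_fun hinvariant measurableSet_Ioi
  change ∫ u in Ioi 0, k u = 2 * ∫ u in Ioi √x, k u
  by_cases hk : IntegrableOn k (Ioi √x)
  · rw [← Ioo_union_Ici_eq_Ioi hr,
      setIntegral_union ((Iio_disjoint_Ici le_rfl).mono_left Ioo_subset_Iio_self)
        measurableSet_Ici (hint.mpr hk) (Iff.mpr integrableOn_Ici_iff_integrableOn_Ioi hk),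
      heq, integral_Ici_eq_integral_Ioi, two_mul]
  · rw [integral_undef hk, mul_zero, integral_undef]
    exact fun h : IntegrableOn k (Ioi 0) ↦ hk (h.mono_set (Ioi_subset_Ioi hr.le))

section Icc

variable {E : Type*} [NormedAddCommGroup E] [NormedSpace ℂ E] {a b : ℝ}

lemma mellinConvergent_indicator_Icc {f : ℝ → E} (ha : 0 < a) (hf : IntegrableOn f (Icc a b))
    (s : ℂ) : MellinConvergent ((Icc a b).indicator f) s := by
  have hcont : ContinuousOn (fun t : ℝ ↦ (t : ℂ) ^ (s - 1)) (Icc a b) := fun t ht ↦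
    (continuousAt_ofReal_cpow_const _ _ (Or.inr (ha.trans_le ht.1).ne')).continuousWithinAt
  rw [MellinConvergent, ← indicator_smul]
  exact ((integrable_indicator_iff measurableSet_Icc).mpr
    (hf.continuousOn_smul hcont isCompact_Icc)).integrableOn

lemma mellin_indicator_Icc (f : ℝ → E) (ha : 0 < a) (s : ℂ) :
    mellin ((Icc a b).indicator f) s = ∫ t in Icc a b, (t : ℂ) ^ (s - 1) • f t := by
  rw [mellin, ← indicator_smul, setIntegral_indicator measurableSet_Icc,
    inter_eq_right.mpr fun t ht ↦ mem_Ioi.mpr (ha.trans_le ht.1)]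

lemma mellinConv_indicator_Icc_of_notMem (f : ℝ → ℂ) (ha : 0 < a) {x : ℝ}
    (hx : x ∉ Icc (a ^ 2) (b ^ 2)) :
    mellinConv ((Icc a b).indicator f) ((Icc a b).indicator f) x = 0 := by
  refine setIntegral_eq_zero_of_forall_eq_zero fun u (hu : 0 < u) ↦ ?_
  by_cases hu' : u ∈ Icc a b
  · by_cases hxu : x / u ∈ Icc a b
    · refine absurd ⟨?_, ?_⟩ hx <;> rw [← mul_div_cancel₀ x hu.ne', sq]
      · exact mul_le_mul hu'.1 hxu.1 ha.le hu.le
      · exact mul_le_mul hu'.2 hxu.2 (ha.le.trans hxu.1) (hu.le.trans hu'.2)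
    · simp [indicator_of_notMem hxu]
  · simp [indicator_of_notMem hu']

lemma integral_Ioi_sqrt_indicator_Icc (f : ℝ → ℂ) (ha : 0 < a) (hab : a ≤ b) {x : ℝ}
    (hx : x ∈ Icc (a ^ 2) (b ^ 2)) :
    ∫ u in Ioi √x, (Icc a b).indicator f u * (Icc a b).indicator f (x / u) * (u : ℂ)⁻¹ =
      ∫ u in √x..min (x / a) b, f u * f (x / u) * (u : ℂ)⁻¹ := by
  have hx0 : 0 < x := (pow_pos ha 2).trans_le hx.1
  have hsq : √x * √x = x := Real.mul_self_sqrt hx0.le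
  have hra : a ≤ √x := (Real.le_sqrt ha.le hx0.le).mpr hx.1
  have hrb : √x ≤ b := (Real.sqrt_le_left (ha.le.trans hab)).mpr hx.2
  have hrm : √x ≤ min (x / a) b := le_min ((le_div_iff₀ ha).mpr (by nlinarith)) hrb
  rw [intervalIntegral.integral_of_le hrm, setIntegral_eq_of_subset_of_forall_sdiff_eq_zero
    measurableSet_Ioi Ioc_subset_Ioi_self]
  · refine setIntegral_congr_fun measurableSet_Ioc fun u hu ↦ ?_
    have hu0 : 0 < u := ha.trans_le (hra.trans hu.1.le)
    have hxu : x / u ≤ √x := (div_le_iff₀ hu0).mpr (by nlinarith [hu.1])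
    have hxua : a ≤ x / u := by
      rw [le_div_iff₀ hu0, mul_comm]
      exact (le_div_iff₀ ha).mp (hu.2.trans (min_le_left _ _))
    have hub : u ∈ Icc a b := ⟨hra.trans hu.1.le, hu.2.trans (min_le_right _ _)⟩
    rw [indicator_of_mem hub,
      indicator_of_mem (show x / u ∈ Icc a b from ⟨hxua, hxu.trans hrb⟩)]
  · rintro u ⟨hu, hu'⟩
    have hu0 : 0 < u := ha.trans_le (hra.trans hu.le)
    rcases min_lt_iff.mp (not_le.mp fun h ↦ hu' ⟨hu, h⟩) with h | h
    · have : x / u ∉ Icc a b := fun h' ↦ by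
        linarith [(le_div_iff₀ hu0).mp h'.1, (div_lt_iff₀ ha).mp h]
      simp [indicator_of_notMem this]
    · simp [indicator_of_notMem fun h' : u ∈ Icc a b ↦ h.not_ge h'.2]

lemma mellin_mellinConv_indicator_Icc_self (f : ℝ → ℂ) (ha : 0 < a) (hab : a ≤ b) (s : ℂ) :
    mellin (mellinConv ((Icc a b).indicator f) ((Icc a b).indicator f)) s =
      2 * ∫ x in (a ^ 2)..(b ^ 2), (x : ℂ) ^ (s - 1) *
        ∫ u in √x..min (x / a) b, f u * f (x / u) * (u : ℂ)⁻¹ := by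
  have hsub : Icc (a ^ 2) (b ^ 2) ⊆ Ioi 0 := fun x hx ↦ (pow_pos ha 2).trans_le hx.1
  rw [mellin, setIntegral_eq_of_subset_of_forall_sdiff_eq_zero measurableSet_Ioi hsub
      fun x hx ↦ by rw [mellinConv_indicator_Icc_of_notMem f ha hx.2, smul_zero],
    intervalIntegral.integral_of_le (pow_le_pow_left₀ ha.le hab 2),
    ← integral_Icc_eq_integral_Ioc, ← integral_const_mul]
  refine setIntegral_congr_fun measurableSet_Icc fun x hx ↦ ?_
  rw [mellinConv_self_eq_two_mul _ (hsub hx), integral_Ioi_sqrt_indicator_Icc f ha hab hx,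
    smul_eq_mul]
  ring

end Icc

theorem stmt6 (a b : ℝ) (ha : 0 < a) (hab : a < b) (f : ℝ → ℂ)
    (hf : IntegrableOn f (Icc a b)) (s : ℂ) :
    (∫ x in a..b, f x * (x:ℂ) ^ (-s)) ^ 2 =
      2 * ∫ x in (a ^ 2)..(b ^ 2), (x:ℂ) ^ (-s) *
        ∫ u in Real.sqrt x..min (x / a) b, f u * f (x / u) * (u:ℂ)⁻¹ := by
  have hg := mellinConvergent_indicator_Icc ha hf (1 - s)
  have hmellin : mellin ((Icc a b).indicator f) (1 - s) = ∫ x in a..b, f x * (x:ℂ) ^ (-s) := by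
    rw [mellin_indicator_Icc f ha, intervalIntegral.integral_of_le hab.le,
      integral_Icc_eq_integral_Ioc, sub_sub_cancel_left]
    simp_rw [smul_eq_mul, mul_comm]
  rw [← hmellin, sq, ← mellin_mellinConv hg hg,
    mellin_mellinConv_indicator_Icc_self f ha hab.le, sub_sub_cancel_left]
end

section
/- Let P(y) = a₀ + a₁y + a₂y² + a₃y³ + a₄y⁴ be a real polynomial and set E₂(T) = ∫₀^T |ζ(1/2+it)|⁴ dt − T·P(log T). Assume there is a constant C such that ∫₁^T E₂(t)² dt ≤ C·T²·(log T)²² for all T ≥ 2. Then for every s with Re s > 1/2 the integral ∫₁^∞ E₂(x) x^{−s−1} dx converges absolutely, the function G(s) = 4!·a₄/(s−1)⁵ + Σ_{j=0}^{3} (a_j·j! + a_{j+1}·(j+1)!)/(s−1)^{j+1} − E₂(1) + s·∫₁^∞ E₂(x) x^{−s−1} dx is analytic on {s : Re s > 1/2} ∖ {1}, and G(s) = Z₂(s) for every s with Re s > 1. In particular Z₂ continues analytically to {Re s > 1/2} ∖ {1}. -/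
/-!
Write `Z(y) = ∫₀^y |ζ(1/2+it)|⁴ dt`, so that `Z(y) = y P(log y) + E₂(y)`. The mean-square
hypothesis gives `∫₁^T E₂² ≪ T^{2+ε}`; partial summation turns this into
`∫₁^∞ E₂(x)² x^{-p} dx < ∞` for `p > 2`, and AM-GM into `∫₁^∞ |E₂(x)| x^{-σ} dx < ∞` for
`σ > 3/2`. Hence `∫₁^∞ E₂(x) x^{-s-1} dx` is holomorphic on `Re s > 1/2`, by dominated
differentiation. Since `Z` is increasing, averaging over `[y, 2y]` gives `Z(y) ≪ y^{1+ε}`, so for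
`Re s > 1` integration by parts yields `Z₂(s) = -Z(1) + s ∫₁^∞ Z(x) x^{-s-1} dx`; inserting
`Z(x) = x P(log x) + E₂(x)` and `∫₁^∞ log^j x · x^{-s} dx = j!/(s-1)^{j+1}` gives `G(s)`.
-/

open MeasureTheory Set Complex Filter Finset Topology

lemma continuousOn_rpow_const_Ici (r : ℝ) : ContinuousOn (fun x : ℝ ↦ x ^ r) (Ici 1) :=
  continuousOn_id.rpow_const fun x (hx : 1 ≤ x) ↦ Or.inl (zero_lt_one.trans_le hx).ne'

-- `f(x) ≪_ε x^{a+ε}` for `x ≥ 1`.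
def HasOrderAtMost (f : ℝ → ℝ) (a : ℝ) : Prop :=
  ∀ ε > 0, ∃ D ≥ (0 : ℝ), ∀ x ≥ (1 : ℝ), |f x| ≤ D * x ^ (a + ε)

namespace HasOrderAtMost

variable {f g : ℝ → ℝ} {a b : ℝ}

lemma of_abs_le (hg : HasOrderAtMost g a) (hfg : ∀ x ≥ (1 : ℝ), |f x| ≤ |g x|) :
    HasOrderAtMost f a := fun ε hε ↦ by
  obtain ⟨D, hD, hg⟩ := hg ε hε
  exact ⟨D, hD, fun x hx ↦ (hfg x hx).trans (hg x hx)⟩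

lemma const (c : ℝ) : HasOrderAtMost (fun _ ↦ c) 0 := fun ε hε ↦
  ⟨|c|, abs_nonneg c, fun x hx ↦ le_mul_of_one_le_right (abs_nonneg c)
    (Real.one_le_rpow hx (by linarith))⟩

lemma log : HasOrderAtMost Real.log 0 := fun ε hε ↦
  ⟨ε⁻¹, by positivity, fun x hx ↦ by
    rw [abs_of_nonneg (Real.log_nonneg hx), zero_add, inv_mul_eq_div]
    exact Real.log_le_rpow_div (by linarith) hε⟩

lemma id : HasOrderAtMost id 1 := fun ε hε ↦
  ⟨1, zero_le_one, fun x hx ↦ by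
    have hx0 : 0 < x := by linarith
    rw [_root_.id, abs_of_pos hx0, one_mul, Real.rpow_add hx0, Real.rpow_one]
    exact le_mul_of_one_le_right hx0.le (Real.one_le_rpow hx hε.le)⟩

lemma add (hf : HasOrderAtMost f a) (hg : HasOrderAtMost g a) :
    HasOrderAtMost (fun x ↦ f x + g x) a := fun ε hε ↦ by
  obtain ⟨D₁, hD₁, hf⟩ := hf ε hε
  obtain ⟨D₂, hD₂, hg⟩ := hg ε hε
  exact ⟨D₁ + D₂, by positivity, fun x hx ↦ (abs_add_le _ _).trans <| by
    linarith [hf x hx, hg x hx]⟩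

lemma mul (hf : HasOrderAtMost f a) (hg : HasOrderAtMost g b) :
    HasOrderAtMost (fun x ↦ f x * g x) (a + b) := fun ε hε ↦ by
  obtain ⟨D₁, hD₁, hf⟩ := hf (ε / 2) (by positivity)
  obtain ⟨D₂, hD₂, hg⟩ := hg (ε / 2) (by positivity)
  refine ⟨D₁ * D₂, by positivity, fun x hx ↦ ?_⟩
  have hx0 : 0 < x := by linarith
  calc |f x * g x| = |f x| * |g x| := abs_mul _ _
    _ ≤ D₁ * x ^ (a + ε / 2) * (D₂ * x ^ (b + ε / 2)) :=
      mul_le_mul (hf x hx) (hg x hx) (abs_nonneg _) (by positivity)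
    _ = D₁ * D₂ * x ^ (a + b + ε) := by
      rw [mul_mul_mul_comm, ← Real.rpow_add hx0]; ring_nf

lemma pow (hf : HasOrderAtMost f 0) (n : ℕ) : HasOrderAtMost (fun x ↦ f x ^ n) 0 := by
  induction n with
  | zero => simpa using const 1
  | succ n ih => simpa [pow_succ] using ih.mul hf

lemma sum {ι : Type*} (s : Finset ι) {f : ι → ℝ → ℝ} (hf : ∀ i ∈ s, HasOrderAtMost (f i) a) :
    HasOrderAtMost (fun x ↦ ∑ i ∈ s, f i x) a := by
  classical
  induction s using Finset.induction_on with
  | empty => exact fun ε _ ↦ ⟨0, le_rfl, fun x _ ↦ by simp⟩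
  | insert i s hi ih =>
    simp only [Finset.sum_insert hi]
    exact (hf i (mem_insert_self i s)).add (ih fun j hj ↦ hf j (mem_insert_of_mem hj))

lemma integrableOn_abs_mul_rpow (hf : HasOrderAtMost f a) (hc : ContinuousOn f (Ici 1))
    {σ : ℝ} (hσ : a + 1 < σ) : IntegrableOn (fun x ↦ |f x| * x ^ (-σ)) (Ioi 1) := by
  obtain ⟨D, -, hD⟩ := hf ((σ - a - 1) / 2) (by linarith)
  have hlt : a + (σ - a - 1) / 2 + -σ < -1 := by linarith
  refine ((integrableOn_Ioi_rpow_of_lt hlt zero_lt_one).const_mul D).mono' ?_ ?_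
  · exact ((hc.abs.mul (continuousOn_rpow_const_Ici _)).mono Ioi_subset_Ici_self
      ).aestronglyMeasurable measurableSet_Ioi
  · filter_upwards [ae_restrict_mem measurableSet_Ioi] with x hx
    have hx0 : 0 < x := zero_lt_one.trans hx
    rw [Real.norm_of_nonneg (by positivity), Real.rpow_add hx0, ← mul_assoc]
    exact mul_le_mul_of_nonneg_right (hD x hx.le) (by positivity)

end HasOrderAtMost

lemma continuousOn_log_pow (n : ℕ) : ContinuousOn (fun x ↦ Real.log x ^ n) (Ici 1) :=
  (Real.continuousOn_log.mono fun x (hx : 1 ≤ x) ↦ (zero_lt_one.trans_le hx).ne').pow n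

lemma hasOrderAtMost_polynomial_log (a : ℕ → ℝ) (n : ℕ) :
    HasOrderAtMost (fun x ↦ ∑ j ∈ range n, a j * Real.log x ^ j) 0 :=
  HasOrderAtMost.sum _ fun j _ ↦
    (add_zero (0 : ℝ)) ▸ (HasOrderAtMost.const (a j)).mul (HasOrderAtMost.log.pow j)

lemma continuousOn_polynomial_log (a : ℕ → ℝ) (n : ℕ) :
    ContinuousOn (fun x ↦ ∑ j ∈ range n, a j * Real.log x ^ j) (Ici 1) :=
  continuousOn_finsetSum _ fun j _ ↦ continuousOn_const.mul (continuousOn_log_pow j)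

lemma intervalIntegrable_of_continuousOn_Ici {f : ℝ → ℝ} {c a b : ℝ} (hf : ContinuousOn f (Ici c))
    (ha : c ≤ a) (hb : c ≤ b) : IntervalIntegrable f volume a b :=
  (hf.mono fun _ hx ↦ (le_min ha hb).trans hx.1).intervalIntegrable

lemma hasDerivAt_integral_one {g : ℝ → ℝ} (hg : ContinuousOn g (Ici 1)) {x : ℝ} (hx : 1 < x) :
    HasDerivAt (fun T ↦ ∫ t in (1 : ℝ)..T, g t) (g x) x :=
  intervalIntegral.integral_hasDerivAt_right
    (intervalIntegrable_of_continuousOn_Ici hg le_rfl hx.le)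
    ((hg.mono Ioi_subset_Ici_self).stronglyMeasurableAtFilter isOpen_Ioi x hx)
    (hg.continuousAt (Ici_mem_nhds hx))

lemma monotoneOn_integral_of_nonneg {g : ℝ → ℝ} {c : ℝ} (hg : ContinuousOn g (Ici c))
    (hg0 : ∀ t ≥ c, 0 ≤ g t) : MonotoneOn (fun T ↦ ∫ t in c..T, g t) (Ici c) :=
  fun _ hx _ hy hxy ↦ intervalIntegral.integral_mono_interval le_rfl hx hxy
    ((ae_restrict_mem measurableSet_Ioc).mono fun t ht ↦ hg0 t ht.1.le)
    (intervalIntegrable_of_continuousOn_Ici hg le_rfl hy)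

lemma integral_mul_rpow_eq {g : ℝ → ℝ} (hg : ContinuousOn g (Ici 1)) (p : ℝ) {T : ℝ}
    (hT : 1 ≤ T) :
    ∫ x in (1 : ℝ)..T, g x * x ^ (-p) =
      (∫ t in (1 : ℝ)..T, g t) * T ^ (-p) +
        p * ∫ x in (1 : ℝ)..T, (∫ t in (1 : ℝ)..x, g t) * x ^ (-p - 1) := by
  have hsub : uIcc 1 T ⊆ Ici 1 := fun _ hx ↦ (le_min le_rfl hT).trans hx.1
  have hparts := intervalIntegral.integral_mul_deriv_eq_deriv_mul_of_hasDerivAt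
    (u := fun T ↦ ∫ t in (1 : ℝ)..T, g t) (v := fun x ↦ x ^ (-p))
    (intervalIntegral.continuousOn_primitive_interval
      ((hg.mono hsub).integrableOn_compact isCompact_uIcc))
    ((continuousOn_rpow_const_Ici _).mono hsub)
    (fun x hx ↦ hasDerivAt_integral_one hg (by simpa [hT] using hx.1))
    (fun x hx ↦ by
      simpa using Real.hasDerivAt_rpow_const (p := -p)
        (Or.inl (zero_lt_one.trans (by simpa [hT] using hx.1)).ne'))
    (intervalIntegrable_of_continuousOn_Ici hg le_rfl hT)
    ((intervalIntegrable_of_continuousOn_Ici (continuousOn_rpow_const_Ici _) le_rfl hT).const_mul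
      (-p))
  simp only [intervalIntegral.integral_same, zero_mul, sub_zero, mul_left_comm _ (-p),
    intervalIntegral.integral_const_mul] at hparts
  linear_combination hparts

lemma integrableOn_mul_rpow_of_hasOrderAtMost_integral {g : ℝ → ℝ} {α p : ℝ}
    (hg : ContinuousOn g (Ici 1)) (hg0 : ∀ x ≥ (1 : ℝ), 0 ≤ g x)
    (hG : HasOrderAtMost (fun T ↦ ∫ t in (1 : ℝ)..T, g t) α) (hαp : α < p) (hp : 0 ≤ p) :
    IntegrableOn (fun x ↦ g x * x ^ (-p)) (Ioi 1) := by
  obtain ⟨ε, hε, rfl⟩ : ∃ ε > 0, p = α + ε + ε := ⟨(p - α) / 2, by linarith, by ring⟩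
  obtain ⟨D, hD0, hD⟩ := hG ε hε
  refine integrableOn_Ioi_of_intervalIntegral_norm_bounded (D + (α + ε + ε) * (D / ε)) 1
    (fun T ↦ ((hg.mul (continuousOn_rpow_const_Ici _)).mono Icc_subset_Ici_self
      ).integrableOn_Icc.mono_set Ioc_subset_Icc_self) tendsto_id ?_
  filter_upwards [eventually_ge_atTop 1] with T hT
  have hT0 : 0 < T := by linarith
  have hTε : T ^ (-ε) ≤ 1 := Real.rpow_le_one_of_one_le_of_nonpos hT (by linarith)
  have hsub : uIcc 1 T ⊆ Ici 1 := fun _ hx ↦ (le_min le_rfl hT).trans hx.1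
  have hboundary : (∫ t in (1 : ℝ)..T, g t) * T ^ (-(α + ε + ε)) ≤ D := calc
    _ ≤ D * T ^ (α + ε) * T ^ (-(α + ε + ε)) :=
      mul_le_mul_of_nonneg_right ((le_abs_self _).trans (hD T hT)) (by positivity)
    _ = D * T ^ (-ε) := by rw [mul_assoc, ← Real.rpow_add hT0]; ring_nf
    _ ≤ D := mul_le_of_le_one_right hD0 hTε
  have hbulk : ∫ x in (1 : ℝ)..T, (∫ t in (1 : ℝ)..x, g t) * x ^ (-(α + ε + ε) - 1) ≤ D / ε := calc
    _ ≤ ∫ x in (1 : ℝ)..T, D * x ^ (-ε - 1) := by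
      refine intervalIntegral.integral_mono_on hT ?_ ((intervalIntegrable_of_continuousOn_Ici
        (continuousOn_rpow_const_Ici _) le_rfl hT).const_mul D) fun x hx ↦ ?_
      · exact ((intervalIntegral.continuousOn_primitive_interval
          ((hg.mono hsub).integrableOn_compact isCompact_uIcc)).mul
          ((continuousOn_rpow_const_Ici _).mono hsub)).intervalIntegrable
      · have hx0 : 0 < x := by linarith [hx.1]
        calc _ ≤ D * x ^ (α + ε) * x ^ (-(α + ε + ε) - 1) :=
              mul_le_mul_of_nonneg_right ((le_abs_self _).trans (hD x hx.1)) (by positivity)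
          _ = D * x ^ (-ε - 1) := by rw [mul_assoc, ← Real.rpow_add hx0]; ring_nf
    _ = D * ((1 - T ^ (-ε)) / ε) := by
      rw [intervalIntegral.integral_const_mul, integral_rpow (Or.inr ⟨by linarith, by simp [hT]⟩),
        sub_add_cancel, Real.one_rpow, div_neg, ← neg_div, neg_sub]
    _ ≤ D * (1 / ε) := by
      gcongr
      linarith [Real.rpow_nonneg hT0.le (-ε)]
    _ = D / ε := mul_one_div D ε
  change ∫ x in (1 : ℝ)..T, ‖g x * x ^ (-(α + ε + ε))‖ ≤ _
  rw [intervalIntegral.integral_congr fun x hx ↦ Real.norm_of_nonneg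
    (mul_nonneg (hg0 x (hsub hx)) (Real.rpow_nonneg (zero_le_one.trans (hsub hx)) _)),
    integral_mul_rpow_eq hg _ hT]
  nlinarith

lemma hasOrderAtMost_of_le_pow_mul_log_pow {f : ℝ → ℝ} {b C : ℝ} {a k : ℕ}
    (hf : MonotoneOn f (Ici 1)) (hf1 : 0 ≤ f 1) (hb : 1 ≤ b)
    (hC : ∀ T ≥ b, f T ≤ C * T ^ a * Real.log T ^ k) : HasOrderAtMost f a := fun ε hε ↦ by
  obtain ⟨D, hD0, hD⟩ := HasOrderAtMost.log.pow k ε hε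
  have hfb : 0 ≤ f b := hf1.trans (hf self_mem_Ici hb hb)
  refine ⟨f b + |C| * D, by positivity, fun T hT ↦ ?_⟩
  have hT0 : 0 < T := by linarith
  have hTa : 1 ≤ T ^ ((a : ℝ) + ε) := Real.one_le_rpow hT (by positivity)
  rw [abs_of_nonneg (hf1.trans (hf self_mem_Ici hT hT))]
  rcases le_total T b with hTb | hTb
  · calc f T ≤ f b := hf hT hb hTb
      _ ≤ f b + |C| * D := le_add_of_nonneg_right (by positivity)
      _ ≤ (f b + |C| * D) * T ^ ((a : ℝ) + ε) := le_mul_of_one_le_right (by positivity) hTa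
  · have hlog : Real.log T ^ k ≤ D * T ^ ε := by simpa using (le_abs_self _).trans (hD T hT)
    calc f T ≤ C * T ^ a * Real.log T ^ k := hC T hTb
      _ ≤ |C| * T ^ a * Real.log T ^ k := mul_le_mul_of_nonneg_right
        (mul_le_mul_of_nonneg_right (le_abs_self C) (by positivity))
        (pow_nonneg (Real.log_nonneg hT) k)
      _ ≤ |C| * T ^ a * (D * T ^ ε) := by gcongr
      _ = |C| * D * T ^ ((a : ℝ) + ε) := by
        rw [Real.rpow_add hT0, Real.rpow_natCast]; ring
      _ ≤ (f b + |C| * D) * T ^ ((a : ℝ) + ε) := by gcongr; linarith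

lemma integrableOn_abs_mul_rpow_of_hasOrderAtMost_integral_sq {f : ℝ → ℝ} {α σ : ℝ}
    (hf : ContinuousOn f (Ici 1)) (hM : HasOrderAtMost (fun T ↦ ∫ t in (1 : ℝ)..T, f t ^ 2) α)
    (hα : 0 ≤ α) (hσ : α + 1 < 2 * σ) : IntegrableOn (fun x ↦ |f x| * x ^ (-σ)) (Ioi 1) := by
  obtain ⟨p, hαp, hpσ⟩ : ∃ p, α < p ∧ p + 1 < 2 * σ :=
    ⟨(α + 2 * σ - 1) / 2, by linarith, by linarith⟩
  have hsq := integrableOn_mul_rpow_of_hasOrderAtMost_integral (hf.pow 2)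
    (fun x _ ↦ sq_nonneg (f x)) hM hαp (by linarith)
  have hpow := integrableOn_Ioi_rpow_of_lt (by linarith : p - 2 * σ < -1) zero_lt_one
  refine ((hsq.add hpow).div_const 2).mono' ?_ ?_
  · exact ((hf.abs.mul (continuousOn_rpow_const_Ici _)).mono Ioi_subset_Ici_self
      ).aestronglyMeasurable measurableSet_Ioi
  · filter_upwards [ae_restrict_mem measurableSet_Ioi] with x hx
    have hx0 : 0 < x := zero_lt_one.trans hx
    have e : ∀ u v : ℝ, x ^ u * x ^ v = x ^ (u + v) := fun u v ↦ (Real.rpow_add hx0 u v).symm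
    rw [Real.norm_of_nonneg (by positivity)]
    show _ ≤ (f x ^ 2 * x ^ (-p) + x ^ (p - 2 * σ)) / 2
    calc |f x| * x ^ (-σ) = 2 * (|f x| * x ^ (-p / 2) * x ^ (p / 2 - σ)) / 2 := by
          rw [mul_assoc, e, show -p / 2 + (p / 2 - σ) = -σ by ring]; ring
      _ ≤ ((|f x| * x ^ (-p / 2)) ^ 2 + (x ^ (p / 2 - σ)) ^ 2) / 2 := by
          gcongr; linarith [two_mul_le_add_sq (|f x| * x ^ (-p / 2)) (x ^ (p / 2 - σ))]
      _ = (f x ^ 2 * x ^ (-p) + x ^ (p - 2 * σ)) / 2 := by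
          rw [mul_pow, sq_abs, sq (x ^ (-p / 2)), sq (x ^ (p / 2 - σ)), e, e]
          ring_nf

/-- Averaging over `[y, 2y]`: `y Z(y) ≤ ∫_y^{2y} Z` as `Z` increases, and the mean of `Z - Q`
there is controlled by its mean square. -/
lemma HasOrderAtMost.of_monotoneOn {Z Q : ℝ → ℝ} (hZ : MonotoneOn Z (Ici 1)) (hZ1 : 0 ≤ Z 1)
    (hZc : ContinuousOn Z (Ici 1)) (hQc : ContinuousOn Q (Ici 1)) (hQ : HasOrderAtMost Q 1)
    (hM : HasOrderAtMost (fun T ↦ ∫ t in (1 : ℝ)..T, (Z t - Q t) ^ 2) 2) :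
    HasOrderAtMost Z 1 := fun ε hε ↦ by
  obtain ⟨D₁, hD₁, hQ⟩ := hQ ε hε
  obtain ⟨D₂, hD₂, hM⟩ := hM ε hε
  refine ⟨2 ^ (1 + ε) * (D₁ + D₂) + 1, by positivity, fun y hy ↦ ?_⟩
  have hy0 : 0 < y := by linarith
  have hy2 : 1 ≤ 2 * y := by linarith
  have hyy : y ≤ 2 * y := by linarith
  have hii : ∀ {f : ℝ → ℝ}, ContinuousOn f (Ici 1) → IntervalIntegrable f volume y (2 * y) :=
    fun hf ↦ intervalIntegrable_of_continuousOn_Ici hf hy hy2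
  have hR : ContinuousOn (fun t ↦ Z t - Q t) (Ici 1) := hZc.sub hQc
  have hR2 : ContinuousOn (fun t ↦ (Z t - Q t) ^ 2) (Ici 1) := hR.pow 2
  rw [abs_of_nonneg (hZ1.trans (hZ self_mem_Ici hy hy))]
  have hZavg : y * Z y ≤ ∫ t in y..2 * y, Z t := by
    have := intervalIntegral.integral_mono_on hyy intervalIntegrable_const (hii hZc)
      fun t ht ↦ hZ hy (hy.trans ht.1) ht.1
    rwa [intervalIntegral.integral_const, smul_eq_mul, show 2 * y - y = y by ring] at this
  have hQavg : ∫ t in y..2 * y, Q t ≤ y * (D₁ * (2 * y) ^ (1 + ε)) := by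
    have : ∫ t in y..2 * y, Q t ≤ ∫ t in y..2 * y, D₁ * (2 * y) ^ (1 + ε) :=
      intervalIntegral.integral_mono_on hyy (hii hQc) intervalIntegrable_const
        fun t ht ↦ (le_abs_self _).trans <| (hQ t (hy.trans ht.1)).trans <| by
          gcongr; exacts [zero_le_one.trans (hy.trans ht.1), ht.2]
    rwa [intervalIntegral.integral_const, smul_eq_mul, show 2 * y - y = y by ring] at this
  have hRsq : ∫ t in y..2 * y, (Z t - Q t) ^ 2 ≤ D₂ * (2 * y) ^ (2 + ε) := by
    rw [← intervalIntegral.integral_interval_sub_left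
      (intervalIntegrable_of_continuousOn_Ici hR2 le_rfl hy2)
      (intervalIntegrable_of_continuousOn_Ici hR2 le_rfl hy)]
    linarith [(le_abs_self _).trans (hM _ hy2),
      intervalIntegral.integral_nonneg (μ := volume) hy fun t _ ↦ sq_nonneg (Z t - Q t)]
  have hRavg : ∫ t in y..2 * y, (Z t - Q t) ≤ (D₂ * (2 * y) ^ (2 + ε) + y) / 2 := by
    have := intervalIntegral.integral_mono_on hyy (hii hR)
      (((hii hR2).add intervalIntegrable_const).div_const 2)
      fun t _ ↦ (by nlinarith [sq_nonneg (Z t - Q t - 1)] :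
        Z t - Q t ≤ ((Z t - Q t) ^ 2 + 1) / 2)
    rw [intervalIntegral.integral_div, intervalIntegral.integral_add (hii hR2)
      intervalIntegrable_const, intervalIntegral.integral_const, smul_eq_mul, mul_one,
      show 2 * y - y = y by ring] at this
    linarith
  have hsplit : ∫ t in y..2 * y, Z t = (∫ t in y..2 * y, Q t) + ∫ t in y..2 * y, (Z t - Q t) := by
    rw [← intervalIntegral.integral_add (hii hQc) (hii hR)]
    simp
  have hpow1 : (2 * y) ^ (1 + ε) = 2 ^ (1 + ε) * y ^ (1 + ε) := Real.mul_rpow zero_le_two hy0.le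
  have hpow2 : (2 * y) ^ (2 + ε) = 2 * y * (2 * y) ^ (1 + ε) := by
    rw [show (2 : ℝ) + ε = 1 + ε + 1 by ring, Real.rpow_add_one (by positivity), mul_comm]
  have hy1 : 1 ≤ y ^ (1 + ε) := Real.one_le_rpow hy (by positivity)
  refine le_of_mul_le_mul_left ?_ hy0
  calc y * Z y ≤ y * (D₁ * (2 * y) ^ (1 + ε)) + (D₂ * (2 * y) ^ (2 + ε) + y) / 2 := by
        linarith
    _ = y * (2 ^ (1 + ε) * (D₁ + D₂) * y ^ (1 + ε) + 1 / 2) := by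
        rw [hpow2, hpow1]; ring
    _ ≤ y * ((2 ^ (1 + ε) * (D₁ + D₂) + 1) * y ^ (1 + ε)) := by
        gcongr; linarith

noncomputable def modifiedMellin (f : ℝ → ℝ) (s : ℂ) : ℂ :=
  ∫ x in Ioi (1 : ℝ), (f x : ℂ) * (x : ℂ) ^ (-s)

lemma modifiedMellin_add_one (f : ℝ → ℝ) (s : ℂ) :
    modifiedMellin f (s + 1) = ∫ x in Ioi (1 : ℝ), (f x : ℂ) * (x : ℂ) ^ (-s - 1) := by
  simp only [modifiedMellin, neg_add']

lemma norm_ofReal_mul_cpow (c : ℝ) {x : ℝ} (hx : 0 < x) (s : ℂ) :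
    ‖(c : ℂ) * (x : ℂ) ^ (-s)‖ = |c| * x ^ (-s.re) := by
  rw [norm_mul, norm_real, norm_cpow_eq_rpow_re_of_pos hx, neg_re, Real.norm_eq_abs]

lemma continuousOn_ofReal_mul_cpow {f : ℝ → ℝ} (hf : ContinuousOn f (Ici 1)) (s : ℂ) :
    ContinuousOn (fun x : ℝ ↦ (f x : ℂ) * (x : ℂ) ^ (-s)) (Ioi 1) :=
  (continuous_ofReal.comp_continuousOn (hf.mono Ioi_subset_Ici_self)).mul <|
    continuous_ofReal.continuousOn.cpow_const fun _ hx ↦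
      ofReal_mem_slitPlane.2 (zero_lt_one.trans hx)

lemma integrableOn_ofReal_mul_cpow {f : ℝ → ℝ} (hf : ContinuousOn f (Ici 1)) {s : ℂ}
    (h : IntegrableOn (fun x ↦ |f x| * x ^ (-s.re)) (Ioi 1)) :
    IntegrableOn (fun x : ℝ ↦ (f x : ℂ) * (x : ℂ) ^ (-s)) (Ioi 1) := by
  refine h.mono' ((continuousOn_ofReal_mul_cpow hf s).aestronglyMeasurable measurableSet_Ioi) ?_
  filter_upwards [ae_restrict_mem measurableSet_Ioi] with x hx
  exact (norm_ofReal_mul_cpow _ (zero_lt_one.trans hx) s).le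

namespace HasOrderAtMost

variable {f : ℝ → ℝ} {a : ℝ}

lemma integrableOn_mul_cpow (hf : HasOrderAtMost f a) (hc : ContinuousOn f (Ici 1)) {s : ℂ}
    (hs : a + 1 < s.re) : IntegrableOn (fun x : ℝ ↦ (f x : ℂ) * (x : ℂ) ^ (-s)) (Ioi 1) :=
  integrableOn_ofReal_mul_cpow hc (hf.integrableOn_abs_mul_rpow hc hs)

lemma tendsto_mul_cpow (hf : HasOrderAtMost f a) {s : ℂ} (hs : a < s.re) :
    Tendsto (fun x : ℝ ↦ (f x : ℂ) * (x : ℂ) ^ (-s)) atTop (𝓝 0) := by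
  obtain ⟨D, -, hD⟩ := hf ((s.re - a) / 2) (by linarith)
  have hε : 0 < (s.re - a) / 2 := by linarith
  refine squeeze_zero_norm' ?_ (by simpa using (tendsto_rpow_neg_atTop hε).const_mul D)
  filter_upwards [eventually_ge_atTop 1] with x hx
  have hx0 : 0 < x := by linarith
  rw [norm_ofReal_mul_cpow _ hx0, show -((s.re - a) / 2) = a + (s.re - a) / 2 + -s.re by ring,
    Real.rpow_add hx0, ← mul_assoc]
  exact mul_le_mul_of_nonneg_right (hD x hx) (by positivity)

end HasOrderAtMost

lemma hasDerivAt_ofReal_cpow {x : ℝ} (hx : 0 < x) (s : ℂ) :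
    HasDerivAt (fun y : ℝ ↦ (y : ℂ) ^ s) (s * (x : ℂ) ^ (s - 1)) x := by
  simpa using ((hasDerivAt_id (x : ℂ)).cpow_const (c := s) (ofReal_mem_slitPlane.2 hx)).comp_ofReal

lemma modifiedMellin_of_hasDerivAt {F f : ℝ → ℝ} {s : ℂ} (hF1 : ContinuousAt F 1)
    (hF : ∀ x > (1 : ℝ), HasDerivAt F (f x) x)
    (hf : IntegrableOn (fun x : ℝ ↦ (f x : ℂ) * (x : ℂ) ^ (-s)) (Ioi 1))
    (hFs : IntegrableOn (fun x : ℝ ↦ (F x : ℂ) * (x : ℂ) ^ (-(s + 1))) (Ioi 1))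
    (hlim : Tendsto (fun x : ℝ ↦ (F x : ℂ) * (x : ℂ) ^ (-s)) atTop (𝓝 0)) :
    modifiedMellin f s = -F 1 + s * modifiedMellin F (s + 1) := by
  have hv : ∀ x > (0 : ℝ),
      HasDerivAt (fun y : ℝ ↦ (y : ℂ) ^ (-s)) (-s * (x : ℂ) ^ (-(s + 1))) x := fun x hx ↦ by
    simpa [sub_eq_add_neg, add_comm] using hasDerivAt_ofReal_cpow hx (-s)
  have h1 : Tendsto (fun x : ℝ ↦ (F x : ℂ) * (x : ℂ) ^ (-s)) (𝓝[>] 1) (𝓝 (F 1)) := by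
    have : ContinuousAt (fun x : ℝ ↦ (F x : ℂ) * (x : ℂ) ^ (-s)) 1 :=
      (continuous_ofReal.continuousAt.comp hF1).mul (hv 1 one_pos).continuousAt
    simpa using this.tendsto.mono_left nhdsWithin_le_nhds
  have := integral_Ioi_mul_deriv_eq_deriv_mul (fun x hx ↦ (hF x hx).ofReal_comp)
    (fun x hx ↦ hv x (zero_lt_one.trans hx))
    (IntegrableOn.congr_fun (hFs.const_mul (-s)) (fun x _ ↦ by simp only [Pi.mul_apply]; ring)
      measurableSet_Ioi) hf h1 hlim
  rw [modifiedMellin, modifiedMellin]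
  simp only [mul_left_comm _ (-s), integral_const_mul] at this
  linear_combination this

open Nat in
lemma modifiedMellin_log_pow (n : ℕ) {s : ℂ} (hs : 1 < s.re) :
    modifiedMellin (fun x ↦ Real.log x ^ n) s = n ! / (s - 1) ^ (n + 1) := by
  have hs1 : s - 1 ≠ 0 := fun h ↦ by simp [sub_eq_zero.1 h] at hs
  induction n with
  | zero =>
    simp only [modifiedMellin, pow_zero, ofReal_one, one_mul]
    rw [integral_Ioi_cpow_of_lt (by simpa using hs) one_pos, ofReal_one, one_cpow,
      show -s + 1 = -(s - 1) by ring]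
    simp [neg_div, neg_inv]
  | succ n ih =>
    have hint : ∀ m : ℕ,
        IntegrableOn (fun x : ℝ ↦ ((Real.log x ^ m : ℝ) : ℂ) * (x : ℂ) ^ (-s)) (Ioi 1) :=
      fun m ↦ (HasOrderAtMost.log.pow m).integrableOn_mul_cpow (continuousOn_log_pow m)
        (by linarith)
    have heq : EqOn (fun x : ℝ ↦ (((n + 1) * Real.log x ^ n * x⁻¹ : ℝ) : ℂ) * (x : ℂ) ^ (-(s - 1)))
        (fun x : ℝ ↦ (n + 1) * (((Real.log x ^ n : ℝ) : ℂ) * (x : ℂ) ^ (-s))) (Ioi 1) :=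
      fun x hx ↦ by
        have hx0 : (x : ℂ) ≠ 0 := ofReal_ne_zero.2 (zero_lt_one.trans hx).ne'
        dsimp only
        rw [show -(s - 1) = -s + 1 by ring, cpow_add _ _ hx0, cpow_one]
        push_cast
        field_simp
    have hder := modifiedMellin_of_hasDerivAt (F := fun x ↦ Real.log x ^ (n + 1))
      (f := fun x ↦ (n + 1) * Real.log x ^ n * x⁻¹) (s := s - 1)
      ((Real.continuousAt_log one_ne_zero).pow (n + 1))
      (fun x hx ↦ by simpa [mul_comm] using (Real.hasDerivAt_log (by positivity)).fun_pow (n + 1))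
      (IntegrableOn.congr_fun ((hint n).const_mul _) heq.symm measurableSet_Ioi)
      (by simpa using hint (n + 1))
      ((HasOrderAtMost.log.pow (n + 1)).tendsto_mul_cpow (by simpa using hs))
    rw [modifiedMellin, setIntegral_congr_fun measurableSet_Ioi heq, integral_const_mul,
      sub_add_cancel] at hder
    change (n + 1 : ℂ) * modifiedMellin (fun x ↦ Real.log x ^ n) s = _ at hder
    rw [ih, Real.log_one, zero_pow n.succ_ne_zero, ofReal_zero, neg_zero, zero_add] at hder
    rw [eq_div_iff (pow_ne_zero _ hs1), factorial_succ]
    field_simp at hder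
    push_cast
    linear_combination -hder

open Nat in
lemma modifiedMellin_polynomial_log (a : ℕ → ℝ) (n : ℕ) {s : ℂ} (hs : 1 < s.re) :
    modifiedMellin (fun x ↦ ∑ j ∈ range n, a j * Real.log x ^ j) s =
      ∑ j ∈ range n, a j * (j ! / (s - 1) ^ (j + 1)) := by
  have hint : ∀ j ∈ range n, IntegrableOn
      (fun x : ℝ ↦ (a j : ℂ) * (((Real.log x ^ j : ℝ) : ℂ) * (x : ℂ) ^ (-s))) (Ioi 1) :=
    fun j _ ↦ ((HasOrderAtMost.log.pow j).integrableOn_mul_cpow (continuousOn_log_pow j)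
      (by linarith)).const_mul _
  simp_rw [← modifiedMellin_log_pow _ hs, modifiedMellin, ← integral_const_mul]
  rw [← integral_finsetSum _ hint]
  congr 1 with x
  push_cast
  rw [Finset.sum_mul]
  exact Finset.sum_congr rfl fun j _ ↦ by ring

lemma differentiableAt_modifiedMellin {f : ℝ → ℝ} {σ : ℝ} (hf : ContinuousOn f (Ici 1))
    (hint : ∀ r > σ, IntegrableOn (fun x ↦ |f x| * x ^ (-r)) (Ioi 1)) {s : ℂ} (hs : σ < s.re) :
    DifferentiableAt ℂ (modifiedMellin f) s := by
  obtain ⟨δ, hδ, hδs⟩ : ∃ δ > 0, σ < s.re - 2 * δ := ⟨(s.re - σ) / 3, by linarith, by linarith⟩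
  have hderiv : ∀ x > (1 : ℝ), ∀ z : ℂ, HasDerivAt (fun z ↦ (f x : ℂ) * (x : ℂ) ^ (-z))
      (-(((f x * Real.log x : ℝ) : ℂ) * (x : ℂ) ^ (-z))) z := fun x hx z ↦ by
    have hx0 : 0 < x := zero_lt_one.trans hx
    refine (((hasDerivAt_id z).neg.const_cpow
      (Or.inl (ofReal_ne_zero.2 hx0.ne'))).const_mul (f x : ℂ)).congr_deriv ?_
    rw [ofReal_mul, ofReal_log hx0.le, Pi.neg_apply, id_eq]
    ring
  have hbound : ∀ x > (1 : ℝ), ∀ z ∈ Metric.ball s δ,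
      ‖-(((f x * Real.log x : ℝ) : ℂ) * (x : ℂ) ^ (-z))‖ ≤
        δ⁻¹ * (|f x| * x ^ (-(s.re - 2 * δ))) := fun x hx z hz ↦ by
    have hx0 : 0 < x := zero_lt_one.trans hx
    have hzs : s.re - δ ≤ z.re := by
      have := (abs_re_le_norm (z - s)).trans (mem_ball_iff_norm.1 hz).le
      rw [sub_re] at this
      linarith [neg_abs_le (z.re - s.re)]
    rw [norm_neg, norm_ofReal_mul_cpow _ hx0, abs_mul, abs_of_nonneg (Real.log_nonneg hx.le)]
    calc |f x| * Real.log x * x ^ (-z.re)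
        ≤ |f x| * (δ⁻¹ * x ^ δ) * x ^ (-(s.re - δ)) := by
          gcongr
          · rw [inv_mul_eq_div]; exact Real.log_le_rpow_div hx0.le hδ
          · linarith
      _ = δ⁻¹ * (|f x| * x ^ (-(s.re - 2 * δ))) := by
          rw [show -(s.re - 2 * δ) = δ + -(s.re - δ) by ring, Real.rpow_add hx0]
          ring
  have hflog : ContinuousOn (fun x ↦ f x * Real.log x) (Ici 1) :=
    hf.mul (by simpa using continuousOn_log_pow 1)
  exact (hasDerivAt_integral_of_dominated_loc_of_deriv_le (Metric.ball_mem_nhds s hδ)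
    (Eventually.of_forall fun z ↦
      (continuousOn_ofReal_mul_cpow hf z).aestronglyMeasurable measurableSet_Ioi)
    (integrableOn_ofReal_mul_cpow hf (hint _ hs))
    ((continuousOn_ofReal_mul_cpow hflog s).neg.aestronglyMeasurable measurableSet_Ioi)
    (ae_restrict_of_forall_mem measurableSet_Ioi hbound)
    ((hint _ hδs).const_mul _)
    (ae_restrict_of_forall_mem measurableSet_Ioi fun x hx z _ ↦ hderiv x hx z)).2.differentiableAt

lemma integrableOn_mul_cpow_of_meanSquare {E : ℝ → ℝ} (hE : ContinuousOn E (Ici 1))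
    (hM : HasOrderAtMost (fun T ↦ ∫ t in (1 : ℝ)..T, E t ^ 2) 2) {s : ℂ} (hs : 3 / 2 < s.re) :
    IntegrableOn (fun x : ℝ ↦ (E x : ℂ) * (x : ℂ) ^ (-s)) (Ioi 1) :=
  integrableOn_ofReal_mul_cpow hE
    (integrableOn_abs_mul_rpow_of_hasOrderAtMost_integral_sq hE hM zero_le_two (by linarith))

lemma differentiableAt_modifiedMellin_of_meanSquare {E : ℝ → ℝ} (hE : ContinuousOn E (Ici 1))
    (hM : HasOrderAtMost (fun T ↦ ∫ t in (1 : ℝ)..T, E t ^ 2) 2) {s : ℂ} (hs : 3 / 2 < s.re) :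
    DifferentiableAt ℂ (modifiedMellin E) s :=
  differentiableAt_modifiedMellin hE (fun _ hσ ↦
    integrableOn_abs_mul_rpow_of_hasOrderAtMost_integral_sq hE hM zero_le_two (by linarith)) hs

section Primitive

variable {g E : ℝ → ℝ} {a : ℕ → ℝ} {n : ℕ}

lemma continuousOn_of_eq_primitive_sub (hg : Continuous g)
    (hE : ∀ T, E T = (∫ t in (0 : ℝ)..T, g t) - T * ∑ j ∈ range n, a j * Real.log T ^ j) :
    ContinuousOn E (Ici 1) := by
  rw [funext hE]
  exact (intervalIntegral.continuous_primitive hg.intervalIntegrable 0).continuousOn.sub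
    (continuousOn_id.mul (continuousOn_polynomial_log a n))

lemma hasOrderAtMost_primitive (hg : Continuous g) (hg0 : ∀ t, 0 ≤ g t)
    (hE : ∀ T, E T = (∫ t in (0 : ℝ)..T, g t) - T * ∑ j ∈ range n, a j * Real.log T ^ j)
    (hM : HasOrderAtMost (fun T ↦ ∫ t in (1 : ℝ)..T, E t ^ 2) 2) :
    HasOrderAtMost (fun T ↦ ∫ t in (0 : ℝ)..T, g t) 1 := by
  simp only [hE] at hM
  have := HasOrderAtMost.id.mul (hasOrderAtMost_polynomial_log a n)
  rw [add_zero] at this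
  exact HasOrderAtMost.of_monotoneOn
    ((monotoneOn_integral_of_nonneg hg.continuousOn fun t _ ↦ hg0 t).mono
    (Ici_subset_Ici.2 zero_le_one)) (intervalIntegral.integral_nonneg zero_le_one fun t _ ↦ hg0 t)
    (intervalIntegral.continuous_primitive hg.intervalIntegrable 0).continuousOn
    (continuousOn_id.mul (continuousOn_polynomial_log a n)) this hM

lemma HasOrderAtMost.integral_one {a : ℝ} (hg : Continuous g) (hg0 : ∀ t, 0 ≤ g t)
    (hZ : HasOrderAtMost (fun T ↦ ∫ t in (0 : ℝ)..T, g t) a) :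
    HasOrderAtMost (fun T ↦ ∫ t in (1 : ℝ)..T, g t) a := hZ.of_abs_le fun T hT ↦ by
  have h1 : 0 ≤ ∫ t in (1 : ℝ)..T, g t := intervalIntegral.integral_nonneg hT fun t _ ↦ hg0 t
  have h2 : 0 ≤ ∫ t in (0 : ℝ)..1, g t :=
    intervalIntegral.integral_nonneg zero_le_one fun t _ ↦ hg0 t
  rw [abs_of_nonneg h1, ← intervalIntegral.integral_interval_sub_left (hg.intervalIntegrable 0 T)
    (hg.intervalIntegrable 0 1)]
  exact (sub_le_self _ h2).trans (le_abs_self _)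

open Nat in
theorem modifiedMellin_eq_of_meanSquare (hg : Continuous g) (hg0 : ∀ t, 0 ≤ g t)
    (hE : ∀ T, E T = (∫ t in (0 : ℝ)..T, g t) - T * ∑ j ∈ range n, a j * Real.log T ^ j)
    (hM : HasOrderAtMost (fun T ↦ ∫ t in (1 : ℝ)..T, E t ^ 2) 2) {s : ℂ} (hs : 1 < s.re) :
    modifiedMellin g s = s * ∑ j ∈ range n, a j * (j ! / (s - 1) ^ (j + 1)) -
      (∫ t in (0 : ℝ)..1, g t) + s * modifiedMellin E (s + 1) := by
  set Z : ℝ → ℝ := fun T ↦ ∫ t in (0 : ℝ)..T, g t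
  have hZc : Continuous Z := intervalIntegral.continuous_primitive hg.intervalIntegrable 0
  have hZ := hasOrderAtMost_primitive hg hg0 hE hM
  have hgs : IntegrableOn (fun x : ℝ ↦ (g x : ℂ) * (x : ℂ) ^ (-s)) (Ioi 1) := by
    refine integrableOn_ofReal_mul_cpow hg.continuousOn ?_
    simp_rw [abs_of_nonneg (hg0 _)]
    exact integrableOn_mul_rpow_of_hasOrderAtMost_integral hg.continuousOn (fun x _ ↦ hg0 x)
      (hZ.integral_one hg hg0) hs (by linarith)
  have hparts := modifiedMellin_of_hasDerivAt hZc.continuousAt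
    (fun x _ ↦ intervalIntegral.integral_hasDerivAt_right (hg.intervalIntegrable 0 x)
      hg.aestronglyMeasurable.stronglyMeasurableAtFilter hg.continuousAt) hgs
    (hZ.integrableOn_mul_cpow hZc.continuousOn (by rw [add_re, one_re]; linarith))
    (hZ.tendsto_mul_cpow (by linarith))
  have hEs := integrableOn_mul_cpow_of_meanSquare (continuousOn_of_eq_primitive_sub hg hE) hM
    (s := s + 1) (by rw [add_re, one_re]; linarith)
  have hPs := (hasOrderAtMost_polynomial_log a n).integrableOn_mul_cpow
    (continuousOn_polynomial_log a n) (s := s) (by linarith)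
  have hsplit : modifiedMellin Z (s + 1) = modifiedMellin (fun x ↦ ∑ j ∈ range n,
      a j * Real.log x ^ j) s + modifiedMellin E (s + 1) := by
    rw [modifiedMellin, modifiedMellin, modifiedMellin, ← integral_add hPs hEs]
    refine setIntegral_congr_fun measurableSet_Ioi fun x hx ↦ ?_
    have hx0 : (x : ℂ) ≠ 0 := ofReal_ne_zero.2 (zero_lt_one.trans hx).ne'
    simp only [Z, hE x]
    rw [show -s = -(s + 1) + 1 by ring, cpow_add _ _ hx0, cpow_one]
    push_cast
    ring
  rw [hparts, hsplit, modifiedMellin_polynomial_log a n hs]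
  ring

end Primitive

lemma mul_sum_div_sub_one_pow {K : Type*} [Field K] (c : ℕ → K) (n : ℕ) {s : K}
    (hs : s - 1 ≠ 0) :
    s * ∑ j ∈ range (n + 1), c j / (s - 1) ^ (j + 1) =
      c n / (s - 1) ^ (n + 1) + ∑ j ∈ range n, (c j + c (j + 1)) / (s - 1) ^ (j + 1) + c 0 := by
  have key : ∀ j, s * (c j / (s - 1) ^ (j + 1)) = c j / (s - 1) ^ j + c j / (s - 1) ^ (j + 1) :=
    fun j ↦ by field_simp; ring
  rw [mul_sum, sum_congr rfl fun j _ ↦ key j, sum_add_distrib,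
    sum_range_succ' (fun j ↦ c j / (s - 1) ^ j), sum_range_succ (fun j ↦ c j / (s - 1) ^ (j + 1))]
  simp only [pow_zero, div_one, add_div, sum_add_distrib]
  ring

lemma continuous_riemannZeta_one_half_add_mul_I :
    Continuous fun t : ℝ ↦ riemannZeta (1 / 2 + t * I) :=
  continuous_iff_continuousAt.2 fun t ↦
    (differentiableAt_riemannZeta fun h ↦ by simpa using congrArg re h).continuousAt.comp
      (by fun_prop)

theorem stmt12 (a : ℕ → ℝ)
    (E2 : ℝ → ℝ)
    (hE2 : ∀ T : ℝ, E2 T =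
      (∫ t in (0:ℝ)..T, ‖riemannZeta (1/2 + t * Complex.I)‖ ^ 4) -
        T * ∑ j ∈ Finset.range 5, a j * Real.log T ^ j)
    (hms : ∃ C : ℝ, ∀ T ≥ (2:ℝ), (∫ t in (1:ℝ)..T, (E2 t) ^ 2) ≤ C * T ^ 2 * Real.log T ^ 22) :
    (∀ s : ℂ, 1/2 < s.re →
      IntegrableOn (fun x : ℝ => (E2 x : ℂ) * (x:ℂ) ^ (-s - 1)) (Ioi (1:ℝ))) ∧
    DifferentiableOn ℂ
      (fun s : ℂ =>
        ((Nat.factorial 4 * a 4 : ℝ) : ℂ) / (s - 1) ^ 5 +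
        (∑ j ∈ Finset.range 4,
          ((a j * Nat.factorial j + a (j+1) * Nat.factorial (j+1) : ℝ) : ℂ) / (s - 1) ^ (j+1)) -
        (E2 1 : ℂ) + s * ∫ x in Ioi (1:ℝ), (E2 x : ℂ) * (x:ℂ) ^ (-s - 1))
      {s : ℂ | 1/2 < s.re ∧ s ≠ 1} ∧
    (∀ s : ℂ, 1 < s.re →
      (((Nat.factorial 4 * a 4 : ℝ) : ℂ) / (s - 1) ^ 5 +
        (∑ j ∈ Finset.range 4,
          ((a j * Nat.factorial j + a (j+1) * Nat.factorial (j+1) : ℝ) : ℂ) / (s - 1) ^ (j+1)) -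
        (E2 1 : ℂ) + s * ∫ x in Ioi (1:ℝ), (E2 x : ℂ) * (x:ℂ) ^ (-s - 1)) =
      ∫ x in Ioi (1:ℝ),
        (‖riemannZeta (1/2 + x * Complex.I)‖ ^ 4 : ℂ) * (x:ℂ) ^ (-s)) := by
  obtain ⟨C, hC⟩ := hms
  have hg : Continuous fun t : ℝ ↦ ‖riemannZeta (1 / 2 + t * I)‖ ^ 4 :=
    continuous_riemannZeta_one_half_add_mul_I.norm.pow 4
  have hEc := continuousOn_of_eq_primitive_sub hg hE2
  have hM : HasOrderAtMost (fun T ↦ ∫ t in (1 : ℝ)..T, E2 t ^ 2) 2 := by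
    simpa using hasOrderAtMost_of_le_pow_mul_log_pow
      (monotoneOn_integral_of_nonneg (hEc.pow 2) fun t _ ↦ sq_nonneg (E2 t)) (by simp)
      one_le_two hC
  simp only [← modifiedMellin_add_one]
  refine ⟨fun s hs ↦ ?_, fun s ⟨hs, hs1⟩ ↦ ?_, fun s hs ↦ ?_⟩
  · rw [← neg_add']
    exact integrableOn_mul_cpow_of_meanSquare hEc hM (by rw [add_re, one_re]; linarith)
  · have := differentiableAt_modifiedMellin_of_meanSquare hEc hM (s := s + 1)
      (by rw [add_re, one_re]; linarith)
    exact DifferentiableAt.differentiableWithinAt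
      (by fun_prop (disch := exact pow_ne_zero _ (sub_ne_zero.2 hs1)))
  · have hs1 : s - 1 ≠ 0 := fun h ↦ by simp [sub_eq_zero.1 h] at hs
    have hE1 : (E2 1 : ℂ) = (∫ t in (0 : ℝ)..1, ‖riemannZeta (1 / 2 + t * I)‖ ^ 4 : ℝ) - a 0 := by
      simp [hE2 1, Finset.sum_range_succ]
    have hZ₂ : ∫ x in Ioi (1 : ℝ), (‖riemannZeta (1 / 2 + x * I)‖ ^ 4 : ℂ) * (x : ℂ) ^ (-s) =
        modifiedMellin (fun t ↦ ‖riemannZeta (1 / 2 + t * I)‖ ^ 4) s := by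
      simp only [modifiedMellin, ofReal_pow]
    rw [hZ₂, modifiedMellin_eq_of_meanSquare hg (fun t ↦ by positivity) hE2 hM hs, hE1]
    have := mul_sum_div_sub_one_pow (fun j ↦ (a j * j.factorial : ℂ)) 4 hs1
    rw [show 4 + 1 = 5 from rfl, Nat.factorial_zero, Nat.cast_one, mul_one] at this
    simp only [mul_div_assoc] at this ⊢
    push_cast
    linear_combination -this
end
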